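/- arXiv:2110.01694 — 13 statements merged into one kernel-verified Lean document; each statement's English description precedes it below -/
import Mathlib

section
/- Let 𝔖 be a directed category and let α : a → a' be an 𝔖-arrow. If α is a Ramsey arrow, then α is amalgamable. Consequently, every directed category with the weak Ramsey property has the weak amalgamation property. -/
open CategoryTheory

universe v u

/-- `𝔖(α, b)`: the set of arrows `a ⟶ b` that factor through `α : a ⟶ a'`,
i.e. arrows of the form `f ∘ α` with `f : a' ⟶ b`. -/
def HomThrough {C : Type u} [Category.{v} C] {a a' : C} (α : a ⟶ a') (b : C) :
    Set (a ⟶ b) :=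
  {h | ∃ f : a' ⟶ b, h = α ≫ f}

/-- `α : a ⟶ a'` is a Ramsey arrow: for every object `b`, every `k ∈ ℕ` and every
finite `F ⊆ 𝔖(α, b)` there is an object `v` such that every coloring
`φ : 𝔖(α, v) → Fin k` is constant on `e ∘ F` for some arrow `e : b ⟶ v`. -/
def IsRamseyArrow {C : Type u} [Category.{v} C] {a a' : C} (α : a ⟶ a') : Prop :=
  ∀ (b : C) (k : ℕ) (F : Finset (a ⟶ b)), (F : Set (a ⟶ b)) ⊆ HomThrough α b →
    ∃ v : C, ∀ φ : HomThrough α v → Fin k,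
      ∃ e : b ⟶ v, ∀ f ∈ F, ∀ g ∈ F,
        ∀ (hf : f ≫ e ∈ HomThrough α v) (hg : g ≫ e ∈ HomThrough α v),
          φ ⟨f ≫ e, hf⟩ = φ ⟨g ≫ e, hg⟩

/-- An arrow `e : z ⟶ z'` is amalgamable if every two arrows out of `z'` can be
equalized over `e` by further arrows. -/
def Amalgamable {C : Type u} [Category.{v} C] {z z' : C} (e : z ⟶ z') : Prop :=
  ∀ ⦃x y : C⦄ (f : z' ⟶ x) (g : z' ⟶ y),
    ∃ (w : C) (f' : x ⟶ w) (g' : y ⟶ w), e ≫ f ≫ f' = e ≫ g ≫ g'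

/-- A category is directed if every two objects map into a common object. -/
def DirectedCat (C : Type u) [Category.{v} C] : Prop :=
  ∀ x y : C, ∃ z : C, Nonempty (x ⟶ z) ∧ Nonempty (y ⟶ z)

/-- The weak Ramsey property: every object is the domain of a Ramsey arrow. -/
def WeakRamsey (C : Type u) [Category.{v} C] : Prop :=
  ∀ a : C, ∃ (a' : C) (α : a ⟶ a'), IsRamseyArrow α

/-- The weak amalgamation property: every object is the domain of an amalgamable arrow. -/
def WeakAmalg (C : Type u) [Category.{v} C] : Prop :=
  ∀ a : C, ∃ (a' : C) (α : a ⟶ a'), Amalgamable α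

/-- In a directed category, every Ramsey arrow is amalgamable; consequently a
directed category with the weak Ramsey property has the weak amalgamation property. -/
theorem ramsey_arrow_amalgamable_of_directed {C : Type u} [Category.{v} C]
    (hdir : DirectedCat C) :
    (∀ {a a' : C} (α : a ⟶ a'), IsRamseyArrow α → Amalgamable α) ∧
    (WeakRamsey C → WeakAmalg C) := by

  have key : ∀ {a a' : C} (α : a ⟶ a'), IsRamseyArrow α → Amalgamable α := by
    intro a a' α hR x y f g
    by_contra hcon
    push_neg at hcon
    obtain ⟨z, ⟨u⟩, ⟨w⟩⟩ := hdir x y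
    classical
    set p : a ⟶ z := α ≫ f ≫ u with hp_def
    set q : a ⟶ z := α ≫ g ≫ w with hq_def
    have hFsub : (({p, q} : Finset (a ⟶ z)) : Set (a ⟶ z)) ⊆ HomThrough α z := by
      intro h hh
      simp only [Finset.coe_insert, Finset.coe_singleton, Set.mem_insert_iff,
        Set.mem_singleton_iff] at hh
      rcases hh with rfl | rfl
      · exact ⟨f ≫ u, rfl⟩
      · exact ⟨g ≫ w, rfl⟩
    obtain ⟨v, hv⟩ := hR z 2 {p, q} hFsub
    set φ : HomThrough α v → Fin 2 :=
      fun h => if ∃ e : z ⟶ v, (h : a ⟶ v) = p ≫ e then 0 else 1 with hφ_def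
    obtain ⟨e, he⟩ := hv φ
    have hp : p ≫ e ∈ HomThrough α v := ⟨f ≫ u ≫ e, by simp [hp_def]⟩
    have hq : q ≫ e ∈ HomThrough α v := ⟨g ≫ w ≫ e, by simp [hq_def]⟩
    have heq := he p (by simp) q (by simp) hp hq
    have h1 : φ ⟨p ≫ e, hp⟩ = 0 := by
      rw [hφ_def]
      exact if_pos ⟨e, rfl⟩
    have h2 : φ ⟨q ≫ e, hq⟩ = 1 := by
      rw [hφ_def]
      refine if_neg ?_
      rintro ⟨e', he'⟩
      have : α ≫ f ≫ (u ≫ e') = α ≫ g ≫ (w ≫ e) := by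
        have := he'.symm
        simpa [hp_def, hq_def] using this
      exact hcon v (u ≫ e') (w ≫ e) this
    rw [h1, h2] at heq
    exact absurd heq (by decide)
  exact ⟨key, fun hWR a => by
    obtain ⟨a', α, hα⟩ := hWR a
    exact ⟨a', α, key α hα⟩⟩
end

section
/- Let α : a → a' and β : a' → a'' be arrows in a category 𝔖. If α is a Ramsey arrow or β is a Ramsey arrow, then the composition β ∘ α is a Ramsey arrow. -/
open CategoryTheory

universe v u

/-- If `α` or `β` is a Ramsey arrow, then the composition `β ∘ α` is a Ramsey arrow. -/
theorem isRamseyArrow_comp {C : Type u} [Category.{v} C] {a a' a'' : C}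
    (α : a ⟶ a') (β : a' ⟶ a'')
    (h : IsRamseyArrow α ∨ IsRamseyArrow β) :
    IsRamseyArrow (α ≫ β) := by
  classical
  intro b k F hF
  rcases h with hα | hβ
  · -- α is Ramsey
    have hF' : (F : Set (a ⟶ b)) ⊆ HomThrough α b := by
      intro f hf
      obtain ⟨g, hg⟩ := hF hf
      exact ⟨β ≫ g, by simp [hg]⟩
    obtain ⟨v, hv⟩ := hα b (k + 1) F hF'
    refine ⟨v, fun φ => ?_⟩
    set ψ : HomThrough α v → Fin (k + 1) := fun x =>
      if h : (x : a ⟶ v) ∈ HomThrough (α ≫ β) v then (φ ⟨x, h⟩).castSucc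
      else Fin.last k with hψ
    obtain ⟨e, he⟩ := hv ψ
    refine ⟨e, fun f hf g hg hfe hge => ?_⟩
    have hfe' : f ≫ e ∈ HomThrough α v := by
      obtain ⟨u, hu⟩ := hfe; exact ⟨β ≫ u, by simp [hu]⟩
    have hge' : g ≫ e ∈ HomThrough α v := by
      obtain ⟨u, hu⟩ := hge; exact ⟨β ≫ u, by simp [hu]⟩
    have key := he f hf g hg hfe' hge'
    simp only [hψ, dif_pos hfe, dif_pos hge] at key
    exact Fin.castSucc_injective k key
  · -- β is Ramsey
    have gw : ∀ f ∈ F, ∃ g : a'' ⟶ b, f = α ≫ β ≫ g := by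
      intro f hf; obtain ⟨g, hg⟩ := hF hf; exact ⟨g, by simpa using hg⟩
    choose g hg using gw
    set F' : Finset (a' ⟶ b) := F.attach.image (fun x => β ≫ g x.1 x.2) with hF'def
    have hF' : (F' : Set (a' ⟶ b)) ⊆ HomThrough β b := by
      intro x hx
      simp only [hF'def, Finset.coe_image, Set.mem_image] at hx
      obtain ⟨⟨f, hf⟩, _, rfl⟩ := hx
      exact ⟨g f hf, rfl⟩
    obtain ⟨v, hv⟩ := hβ b k F' hF'
    refine ⟨v, fun φ => ?_⟩
    have mem : ∀ x : HomThrough β v, α ≫ (x : a' ⟶ v) ∈ HomThrough (α ≫ β) v := by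
      rintro ⟨x, u, rfl⟩; exact ⟨u, by simp⟩
    set ψ : HomThrough β v → Fin k := fun x => φ ⟨α ≫ (x : a' ⟶ v), mem x⟩ with hψ
    obtain ⟨e, he⟩ := hv ψ
    refine ⟨e, fun f hf f' hf' hfe hfe' => ?_⟩
    have m1 : β ≫ g f hf ∈ F' :=
      Finset.mem_image_of_mem _ (F.mem_attach ⟨f, hf⟩)
    have m2 : β ≫ g f' hf' ∈ F' :=
      Finset.mem_image_of_mem _ (F.mem_attach ⟨f', hf'⟩)
    have me1 : (β ≫ g f hf) ≫ e ∈ HomThrough β v := ⟨g f hf ≫ e, by simp⟩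
    have me2 : (β ≫ g f' hf') ≫ e ∈ HomThrough β v := ⟨g f' hf' ≫ e, by simp⟩
    have key := he _ m1 _ m2 me1 me2
    simp only [hψ] at key
    have q1 : f ≫ e = α ≫ (β ≫ g f hf) ≫ e := by
      conv_lhs => rw [hg f hf]
      simp
    have q2 : f' ≫ e = α ≫ (β ≫ g f' hf') ≫ e := by
      conv_lhs => rw [hg f' hf']
      simp
    have e1 : (⟨f ≫ e, hfe⟩ : HomThrough (α ≫ β) v)
        = ⟨α ≫ (β ≫ g f hf) ≫ e, mem ⟨_, me1⟩⟩ := Subtype.ext q1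
    have e2 : (⟨f' ≫ e, hfe'⟩ : HomThrough (α ≫ β) v)
        = ⟨α ≫ (β ≫ g f' hf') ≫ e, mem ⟨_, me2⟩⟩ := Subtype.ext q2
    rw [e1, e2]
    exact key
end

section
/- Let α : a → a' and β : a' → a'' be arrows in a category 𝔖. If α is amalgamable and the composition β ∘ α is a Ramsey arrow, then α is a Ramsey arrow. -/
open CategoryTheory

universe v u

/-- If `α` is amalgamable and `β ∘ α` is Ramsey, then `α` is Ramsey. -/
theorem isRamseyArrow_of_amalgamable_of_comp {C : Type u} [Category.{v} C]
    {a a' a'' : C} (α : a ⟶ a') (β : a' ⟶ a'')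
    (hα : Amalgamable α) (hcomp : IsRamseyArrow (α ≫ β)) :
    IsRamseyArrow α := by
  intro b k F hF
  -- Step 1: find `ε : b ⟶ b₁` pushing all of `F` into `HomThrough (α ≫ β) b₁`.
  have key : ∃ (b₁ : C) (ε : b ⟶ b₁), ∀ f ∈ F, f ≫ ε ∈ HomThrough (α ≫ β) b₁ := by
    classical
    induction F using Finset.induction_on with
    | empty => exact ⟨b, 𝟙 b, by simp⟩
    | insert _ _ hnotmem ih =>
      rename_i f₀ s
      obtain ⟨b₁, ε, hε⟩ := ih (by
        refine Set.Subset.trans ?_ hF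
        intro x hx; simp only [Finset.coe_insert]; exact Set.mem_insert_of_mem _ hx)
      obtain ⟨f₀', hf₀'⟩ := hF (by simp : f₀ ∈ (insert f₀ s : Finset _))
      obtain ⟨w, δ, g'', hw⟩ := hα (f₀' ≫ ε) β
      refine ⟨w, ε ≫ δ, ?_⟩
      intro f hf
      rcases Finset.mem_insert.mp hf with rfl | hf
      · refine ⟨g'', ?_⟩
        rw [hf₀']
        simpa using hw
      · obtain ⟨h, hh⟩ := hε f hf
        exact ⟨h ≫ δ, by rw [← Category.assoc, hh, Category.assoc]⟩
  obtain ⟨b₁, ε, hε⟩ := key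
  classical
  set F₁ : Finset (a ⟶ b₁) := F.image (fun f => f ≫ ε) with hF₁def
  have hF₁ : (F₁ : Set (a ⟶ b₁)) ⊆ HomThrough (α ≫ β) b₁ := by
    intro x hx
    simp only [hF₁def, Finset.coe_image, Set.mem_image, Finset.mem_coe] at hx
    obtain ⟨f, hf, rfl⟩ := hx
    exact hε f hf
  obtain ⟨v, hv⟩ := hcomp b₁ k F₁ hF₁
  refine ⟨v, ?_⟩
  intro φ
  -- restrict φ to HomThrough (α ≫ β) v
  have incl : ∀ {h : a ⟶ v}, h ∈ HomThrough (α ≫ β) v → h ∈ HomThrough α v := by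
    rintro h ⟨g, rfl⟩; exact ⟨β ≫ g, by simp⟩
  obtain ⟨e, he⟩ := hv (fun x => φ ⟨x.1, incl x.2⟩)
  refine ⟨ε ≫ e, ?_⟩
  intro f hf g hg hfe hge
  have hfm : f ≫ ε ∈ F₁ := Finset.mem_image_of_mem _ hf
  have hgm : g ≫ ε ∈ F₁ := Finset.mem_image_of_mem _ hg
  have hfm' : (f ≫ ε) ≫ e ∈ HomThrough (α ≫ β) v := by
    obtain ⟨h, hh⟩ := hε f hf
    exact ⟨h ≫ e, by rw [hh, Category.assoc]⟩
  have hgm' : (g ≫ ε) ≫ e ∈ HomThrough (α ≫ β) v := by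
    obtain ⟨h, hh⟩ := hε g hg
    exact ⟨h ≫ e, by rw [hh, Category.assoc]⟩
  have := he (f ≫ ε) hfm (g ≫ ε) hgm hfm' hgm'
  simp only at this
  convert this using 2 <;> simp [Category.assoc]
end

section
/- Let F : 𝔖 → 𝔖' be a full cofinal functor, i.e. F is full and for every object x of 𝔖' there exist an object y of 𝔖 and an 𝔖'-arrow f : x → F(y). If α : a → a' is a Ramsey arrow in 𝔖, then F(α) is a Ramsey arrow in 𝔖'. -/
open CategoryTheory

universe v u v₂ u₂

/-- If `F : 𝔖 ⥤ 𝔖'` is a full functor that is cofinal (every object of `𝔖'` admits an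
arrow into the image of `F`), then `F` maps Ramsey arrows to Ramsey arrows. -/
theorem isRamseyArrow_map_of_full_cofinal {C : Type u} [Category.{v} C]
    {D : Type u₂} [Category.{v₂} D] (F : C ⥤ D) [F.Full]
    (hcof : ∀ x : D, ∃ y : C, Nonempty (x ⟶ F.obj y))
    {a a' : C} (α : a ⟶ a') (h : IsRamseyArrow α) :
    IsRamseyArrow (F.map α) := by
  classical
  intro b' k S hS
  obtain ⟨y, ⟨u⟩⟩ := hcof b'
  have hg : ∀ h ∈ S, ∃ g : a' ⟶ y, F.map (α ≫ g) = h ≫ u := by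
    intro h2 hh
    obtain ⟨f, hf⟩ := hS hh
    obtain ⟨g, hgg⟩ := F.map_surjective (f ≫ u)
    exact ⟨g, by simp [hf, hgg]⟩
  choose g hgspec using hg
  set S' : Finset (a ⟶ y) := S.attach.image (fun p => α ≫ g p.1 p.2) with hS'
  have hsub : (S' : Set (a ⟶ y)) ⊆ HomThrough α y := by
    intro m hm
    simp only [hS', Finset.coe_image, Set.mem_image] at hm
    obtain ⟨p, _, hp⟩ := hm
    exact ⟨g p.1 p.2, hp.symm⟩
  obtain ⟨v, hv⟩ := h y k S' hsub
  refine ⟨F.obj v, fun φ => ?_⟩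
  have memF : ∀ {m : a ⟶ v}, m ∈ HomThrough α v →
      F.map m ∈ HomThrough (F.map α) (F.obj v) := by
    rintro m ⟨g', hg'⟩
    exact ⟨F.map g', by rw [hg', F.map_comp]⟩
  obtain ⟨e, he⟩ := hv (fun m => φ ⟨F.map m.1, memF m.2⟩)
  refine ⟨u ≫ F.map e, ?_⟩
  intro f hf f' hf' hmf hmf'
  have key : ∀ h2, ∀ hh : h2 ∈ S,
      h2 ≫ (u ≫ F.map e) = F.map ((α ≫ g h2 hh) ≫ e) := by
    intro h2 hh
    rw [F.map_comp, hgspec h2 hh, Category.assoc]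
  have m1 : (α ≫ g f hf) ≫ e ∈ HomThrough α v := ⟨g f hf ≫ e, by simp⟩
  have m2 : (α ≫ g f' hf') ≫ e ∈ HomThrough α v := ⟨g f' hf' ≫ e, by simp⟩
  have e1 : φ ⟨f ≫ (u ≫ F.map e), hmf⟩ = φ ⟨F.map ((α ≫ g f hf) ≫ e), memF m1⟩ :=
    congrArg φ (Subtype.ext (key f hf))
  have e2 : φ ⟨f' ≫ (u ≫ F.map e), hmf'⟩ = φ ⟨F.map ((α ≫ g f' hf') ≫ e), memF m2⟩ :=
    congrArg φ (Subtype.ext (key f' hf'))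
  rw [e1, e2]
  exact he _ (Finset.mem_image.2 ⟨⟨f, hf⟩, Finset.mem_attach _ _, rfl⟩)
    _ (Finset.mem_image.2 ⟨⟨f', hf'⟩, Finset.mem_attach _ _, rfl⟩) m1 m2
end

section
/- Let 𝔖 be a full cofinal subcategory of a category 𝔖', i.e. 𝔖 is a full subcategory and for every object x of 𝔖' there is an object y of 𝔖 with 𝔖'(x,y) ≠ ∅. Then an 𝔖-arrow α : a → a' is a Ramsey arrow in 𝔖 if and only if it is a Ramsey arrow in 𝔖'. -/
open CategoryTheory

universe v u

/-- Let `𝔖` be the full subcategory of `𝔖'` on objects satisfying `P`, and assume it is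
cofinal: every object of `𝔖'` admits an arrow to an object satisfying `P`. Then an
`𝔖`-arrow is a Ramsey arrow in `𝔖` iff it is a Ramsey arrow in `𝔖'`. -/
theorem isRamseyArrow_fullSubcategory_iff {C : Type u} [Category.{v} C] (P : C → Prop)
    (hcof : ∀ x : C, ∃ y : C, P y ∧ Nonempty (x ⟶ y))
    {a a' : ObjectProperty.FullSubcategory P} (α : a ⟶ a') :
    IsRamseyArrow α ↔ IsRamseyArrow ((ObjectProperty.ι P).map α) := by
  classical
  constructor
  · -- Ramsey in subcategory → Ramsey in C
    intro hR b k F hF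
    obtain ⟨b', hPb', ⟨w⟩⟩ := hcof b
    set F' : Finset (a ⟶ (⟨b', hPb'⟩ : ObjectProperty.FullSubcategory P)) :=
      F.image (fun f => ObjectProperty.homMk (f ≫ w)) with hF'def
    have hF' : (F' : Set _) ⊆ HomThrough α (⟨b', hPb'⟩ : ObjectProperty.FullSubcategory P) := by
      intro h hh
      simp only [hF'def, Finset.coe_image, Set.mem_image, Finset.mem_coe] at hh
      obtain ⟨f, hf, rfl⟩ := hh
      obtain ⟨f', hf'⟩ := hF hf
      refine ⟨ObjectProperty.homMk (f' ≫ w), ?_⟩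
      apply ObjectProperty.hom_ext
      simp [hf']
    obtain ⟨v, hv⟩ := hR ⟨b', hPb'⟩ k F' hF'
    refine ⟨v.obj, ?_⟩
    intro φ
    have hmem : ∀ h : HomThrough α v, h.1.hom ∈ HomThrough ((ObjectProperty.ι P).map α) v.obj := by
      rintro ⟨h, f0, rfl⟩
      exact ⟨f0.hom, by simp⟩
    obtain ⟨e, he⟩ := hv (fun h => φ ⟨h.1.hom, hmem h⟩)
    refine ⟨w ≫ e.hom, ?_⟩
    intro f hf g hg hfe hge
    have hfw : ObjectProperty.homMk (f ≫ w) ∈ F' := Finset.mem_image_of_mem _ hf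
    have hgw : ObjectProperty.homMk (g ≫ w) ∈ F' := Finset.mem_image_of_mem _ hg
    obtain ⟨f0, hf0⟩ := hF hf
    obtain ⟨g0, hg0⟩ := hF hg
    have m1 : ObjectProperty.homMk (f ≫ w) ≫ e ∈ HomThrough α v := by
      refine ⟨ObjectProperty.homMk (f0 ≫ w ≫ e.hom), ?_⟩
      apply ObjectProperty.hom_ext
      simp [hf0]
    have m2 : ObjectProperty.homMk (g ≫ w) ≫ e ∈ HomThrough α v := by
      refine ⟨ObjectProperty.homMk (g0 ≫ w ≫ e.hom), ?_⟩
      apply ObjectProperty.hom_ext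
      simp [hg0]
    have key := he _ hfw _ hgw m1 m2
    have e1 : φ ⟨f ≫ w ≫ e.hom, hfe⟩ = φ ⟨(ObjectProperty.homMk (f ≫ w) ≫ e).hom, hmem ⟨_, m1⟩⟩ := by
      congr 1; exact Subtype.ext (by simp)
    have e2 : φ ⟨g ≫ w ≫ e.hom, hge⟩ = φ ⟨(ObjectProperty.homMk (g ≫ w) ≫ e).hom, hmem ⟨_, m2⟩⟩ := by
      congr 1; exact Subtype.ext (by simp)
    rw [e1, e2]; exact key
  · -- Ramsey in C → Ramsey in subcategory
    intro hR b k F hF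
    have hFC : ((F.image (fun f => f.hom) : Finset ((ObjectProperty.ι P).obj a ⟶ b.obj)) :
        Set ((ObjectProperty.ι P).obj a ⟶ b.obj)) ⊆
        HomThrough ((ObjectProperty.ι P).map α) b.obj := by
      intro h hh
      simp only [Finset.coe_image, Set.mem_image, Finset.mem_coe] at hh
      obtain ⟨f, hf, rfl⟩ := hh
      obtain ⟨f0, rfl⟩ := hF hf
      exact ⟨f0.hom, by simp⟩
    obtain ⟨v, hv⟩ := hR b.obj k _ hFC
    obtain ⟨v', hPv', ⟨w⟩⟩ := hcof v
    refine ⟨⟨v', hPv'⟩, ?_⟩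
    intro φ
    have hψmem : ∀ h : HomThrough ((ObjectProperty.ι P).map α) v,
        ObjectProperty.homMk (h.1 ≫ w) ∈
          HomThrough α (⟨v', hPv'⟩ : ObjectProperty.FullSubcategory P) := by
      rintro ⟨h, f0, rfl⟩
      refine ⟨ObjectProperty.homMk (f0 ≫ w), ?_⟩
      apply ObjectProperty.hom_ext
      simp
    set ψ : HomThrough ((ObjectProperty.ι P).map α) v → Fin k :=
      fun h => φ ⟨ObjectProperty.homMk (h.1 ≫ w), hψmem h⟩ with hψdef
    obtain ⟨e, he⟩ := hv ψ
    refine ⟨ObjectProperty.homMk (e ≫ w), ?_⟩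
    intro f hf g hg hfe hge
    obtain ⟨f0, hf0⟩ := hF hf
    obtain ⟨g0, hg0⟩ := hF hg
    have m1 : f.hom ≫ e ∈ HomThrough ((ObjectProperty.ι P).map α) v := by
      refine ⟨f0.hom ≫ e, ?_⟩
      simp [hf0]
    have m2 : g.hom ≫ e ∈ HomThrough ((ObjectProperty.ι P).map α) v := by
      refine ⟨g0.hom ≫ e, ?_⟩
      simp [hg0]
    have key := he f.hom (Finset.mem_image_of_mem _ hf) g.hom (Finset.mem_image_of_mem _ hg) m1 m2
    have e1 : φ ⟨_, hfe⟩ = ψ ⟨_, m1⟩ := by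
      show φ _ = φ _
      apply congrArg φ
      apply Subtype.ext
      apply ObjectProperty.hom_ext
      simp
    have e2 : φ ⟨_, hge⟩ = ψ ⟨_, m2⟩ := by
      show φ _ = φ _
      apply congrArg φ
      apply Subtype.ext
      apply ObjectProperty.hom_ext
      simp
    exact e1.trans (key.trans e2.symm)
end

section
/- Let 𝔖 be a full cofinal subcategory of a category 𝔖'. Then 𝔖 has the weak Ramsey property if and only if 𝔖' has the weak Ramsey property. -/
open CategoryTheory

universe v u

/-- Let `𝔖` be the full subcategory of `𝔖'` on objects satisfying `P`, and assume it is
cofinal. Then `𝔖` has the weak Ramsey property iff `𝔖'` has the weak Ramsey property. -/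
theorem weakRamsey_fullSubcategory_iff {C : Type u} [Category.{v} C] (P : C → Prop)
    (hcof : ∀ x : C, ∃ y : C, P y ∧ Nonempty (x ⟶ y)) :
    WeakRamsey (ObjectProperty.FullSubcategory P) ↔ WeakRamsey C := by
  classical
  constructor
  · -- subcategory Ramsey → ambient Ramsey
    intro hS a
    obtain ⟨y, hy, ⟨β⟩⟩ := hcof a
    obtain ⟨⟨y', hy'⟩, α, hα⟩ := hS ⟨y, hy⟩
    refine ⟨y', β ≫ α.hom, ?_⟩
    intro b k F hF
    obtain ⟨b₀, hb₀, ⟨θ⟩⟩ := hcof b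
    have hg : ∀ f ∈ F, ∃ g : y' ⟶ b, f = (β ≫ α.hom) ≫ g := fun f hf => hF hf
    let g : ∀ f ∈ F, (y' ⟶ b) := fun f hf => (hg f hf).choose
    have hgs : ∀ f (hf : f ∈ F), f = (β ≫ α.hom) ≫ g f hf :=
      fun f hf => (hg f hf).choose_spec
    let F' : Finset ((⟨y, hy⟩ : ObjectProperty.FullSubcategory P) ⟶ ⟨b₀, hb₀⟩) :=
      F.attach.image (fun f => ObjectProperty.homMk (X := ⟨y, hy⟩) (Y := ⟨b₀, hb₀⟩)
        (α.hom ≫ g f.1 f.2 ≫ θ))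
    have hF' : (F' : Set _) ⊆
        HomThrough (α : (⟨y, hy⟩ : ObjectProperty.FullSubcategory P) ⟶ ⟨y', hy'⟩) ⟨b₀, hb₀⟩ := by
      intro h hh
      simp only [F', Finset.coe_image, Set.mem_image, Finset.mem_coe, Finset.mem_attach,
        true_and] at hh
      obtain ⟨f, _, rfl⟩ := hh
      exact ⟨ObjectProperty.homMk (g f.1 f.2 ≫ θ), rfl⟩
    obtain ⟨⟨v, hv⟩, hRam⟩ := hα ⟨b₀, hb₀⟩ k F' hF'
    refine ⟨v, ?_⟩
    intro φ
    let ψ : HomThrough (α : (⟨y, hy⟩ : ObjectProperty.FullSubcategory P) ⟶ ⟨y', hy'⟩)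
        ⟨v, hv⟩ → Fin k :=
      fun p => φ ⟨β ≫ p.1.hom, by
        obtain ⟨f, hf⟩ := p.2
        refine ⟨f.hom, ?_⟩
        have hf' : p.1.hom = α.hom ≫ f.hom := congrArg (fun x => x.hom) hf
        rw [hf']; exact (Category.assoc β _ _).symm⟩
    obtain ⟨e, he⟩ := hRam ψ
    refine ⟨θ ≫ e.hom, ?_⟩
    intro f hf f₂ hf₂ hmf hmf₂
    have mem1 : ObjectProperty.homMk (X := ⟨y, hy⟩) (Y := ⟨b₀, hb₀⟩)
        (α.hom ≫ g f hf ≫ θ) ∈ F' := by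
      simp only [F', Finset.mem_image]
      exact ⟨⟨f, hf⟩, Finset.mem_attach _ _, rfl⟩
    have mem2 : ObjectProperty.homMk (X := ⟨y, hy⟩) (Y := ⟨b₀, hb₀⟩)
        (α.hom ≫ g f₂ hf₂ ≫ θ) ∈ F' := by
      simp only [F', Finset.mem_image]
      exact ⟨⟨f₂, hf₂⟩, Finset.mem_attach _ _, rfl⟩
    have hm1 : ObjectProperty.homMk (X := ⟨y, hy⟩) (Y := ⟨b₀, hb₀⟩)
        (α.hom ≫ g f hf ≫ θ) ≫ e ∈
        HomThrough (α : (⟨y, hy⟩ : ObjectProperty.FullSubcategory P) ⟶ ⟨y', hy'⟩) ⟨v, hv⟩ :=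
      ⟨ObjectProperty.homMk (g f hf ≫ θ ≫ e.hom), InducedCategory.hom_ext (by simp)⟩
    have hm2 : ObjectProperty.homMk (X := ⟨y, hy⟩) (Y := ⟨b₀, hb₀⟩)
        (α.hom ≫ g f₂ hf₂ ≫ θ) ≫ e ∈
        HomThrough (α : (⟨y, hy⟩ : ObjectProperty.FullSubcategory P) ⟶ ⟨y', hy'⟩) ⟨v, hv⟩ :=
      ⟨ObjectProperty.homMk (g f₂ hf₂ ≫ θ ≫ e.hom), InducedCategory.hom_ext (by simp)⟩
    have key := he _ mem1 _ mem2 hm1 hm2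
    have e1 : β ≫ (ObjectProperty.homMk (X := ⟨y, hy⟩) (Y := ⟨b₀, hb₀⟩)
        (α.hom ≫ g f hf ≫ θ) ≫ e).hom = f ≫ θ ≫ e.hom := by
      conv_rhs => rw [hgs f hf]
      simp
    have e2 : β ≫ (ObjectProperty.homMk (X := ⟨y, hy⟩) (Y := ⟨b₀, hb₀⟩)
        (α.hom ≫ g f₂ hf₂ ≫ θ) ≫ e).hom = f₂ ≫ θ ≫ e.hom := by
      conv_rhs => rw [hgs f₂ hf₂]
      simp
    calc φ ⟨f ≫ θ ≫ e.hom, hmf⟩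
        = ψ ⟨ObjectProperty.homMk (X := ⟨y, hy⟩) (Y := ⟨b₀, hb₀⟩)
            (α.hom ≫ g f hf ≫ θ) ≫ e, hm1⟩ :=
          (congrArg φ (Subtype.ext e1)).symm
      _ = ψ ⟨ObjectProperty.homMk (X := ⟨y, hy⟩) (Y := ⟨b₀, hb₀⟩)
            (α.hom ≫ g f₂ hf₂ ≫ θ) ≫ e, hm2⟩ := key
      _ = φ ⟨f₂ ≫ θ ≫ e.hom, hmf₂⟩ := congrArg φ (Subtype.ext e2)
  · -- ambient Ramsey → subcategory Ramsey
    rintro hC ⟨a, ha⟩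
    obtain ⟨a', α, hα⟩ := hC a
    obtain ⟨y, hy, ⟨γ⟩⟩ := hcof a'
    refine ⟨⟨y, hy⟩, ObjectProperty.homMk (α ≫ γ), ?_⟩
    rintro ⟨b, hb⟩ k F hF
    set αγ : (⟨a, ha⟩ : ObjectProperty.FullSubcategory P) ⟶ ⟨y, hy⟩ :=
      ObjectProperty.homMk (α ≫ γ) with hαγ
    let F₀ : Finset (a ⟶ b) := F.image (fun f => f.hom)
    have hF' : (F₀ : Set (a ⟶ b)) ⊆ HomThrough α b := by
      intro h hh
      simp only [F₀, Finset.coe_image, Set.mem_image, Finset.mem_coe] at hh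
      obtain ⟨h₀, hh, rfl⟩ := hh
      obtain ⟨f, hf⟩ := hF hh
      have hf' : h₀.hom = (α ≫ γ) ≫ f.hom := congrArg (fun x => x.hom) hf
      refine ⟨γ ≫ f.hom, ?_⟩
      rw [hf']; exact Category.assoc α γ _
    obtain ⟨v, hRam⟩ := hα b (k + 1) F₀ hF'
    obtain ⟨w, hw, ⟨δ⟩⟩ := hcof v
    refine ⟨⟨w, hw⟩, ?_⟩
    intro φ
    let ψ : HomThrough α v → Fin (k + 1) := fun p =>
      if hmem : ObjectProperty.homMk (X := ⟨a, ha⟩) (Y := ⟨w, hw⟩) (p.1 ≫ δ) ∈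
          HomThrough αγ ⟨w, hw⟩
      then (φ ⟨ObjectProperty.homMk (p.1 ≫ δ), hmem⟩).castSucc else Fin.last k
    obtain ⟨e, he⟩ := hRam ψ
    refine ⟨ObjectProperty.homMk (X := ⟨b, hb⟩) (Y := ⟨w, hw⟩) (e ≫ δ), ?_⟩
    intro f hf f₂ hf₂ hmf hmf₂
    have hf0 : f.hom ∈ F₀ := Finset.mem_image_of_mem _ hf
    have hf0₂ : f₂.hom ∈ F₀ := Finset.mem_image_of_mem _ hf₂
    have h1 : (f.hom ≫ e : a ⟶ v) ∈ HomThrough α v := by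
      obtain ⟨g, hg⟩ := hF' hf0
      refine ⟨g ≫ e, ?_⟩
      rw [hg]; exact Category.assoc α g e
    have h2 : (f₂.hom ≫ e : a ⟶ v) ∈ HomThrough α v := by
      obtain ⟨g, hg⟩ := hF' hf0₂
      refine ⟨g ≫ e, ?_⟩
      rw [hg]; exact Category.assoc α g e
    have key := he _ hf0 _ hf0₂ h1 h2
    have c1 : ObjectProperty.homMk (X := ⟨a, ha⟩) (Y := ⟨w, hw⟩) ((f.hom ≫ e) ≫ δ) ∈
        HomThrough αγ ⟨w, hw⟩ := by
      obtain ⟨g, hg⟩ := hmf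
      refine ⟨g, ?_⟩
      refine Eq.trans ?_ hg
      exact InducedCategory.hom_ext (by simp)
    have c2 : ObjectProperty.homMk (X := ⟨a, ha⟩) (Y := ⟨w, hw⟩) ((f₂.hom ≫ e) ≫ δ) ∈
        HomThrough αγ ⟨w, hw⟩ := by
      obtain ⟨g, hg⟩ := hmf₂
      refine ⟨g, ?_⟩
      refine Eq.trans ?_ hg
      exact InducedCategory.hom_ext (by simp)
    simp only [ψ, dif_pos c1, dif_pos c2] at key
    have key' := Fin.castSucc_injective k key
    have as1 : f ≫ ObjectProperty.homMk (X := ⟨b, hb⟩) (Y := ⟨w, hw⟩) (e ≫ δ)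
        = ObjectProperty.homMk (X := ⟨a, ha⟩) (Y := ⟨w, hw⟩) ((f.hom ≫ e) ≫ δ) :=
      InducedCategory.hom_ext (by simp)
    have as2 : ObjectProperty.homMk (X := ⟨a, ha⟩) (Y := ⟨w, hw⟩) ((f₂.hom ≫ e) ≫ δ)
        = f₂ ≫ ObjectProperty.homMk (X := ⟨b, hb⟩) (Y := ⟨w, hw⟩) (e ≫ δ) :=
      InducedCategory.hom_ext (by simp)
    calc φ ⟨f ≫ ObjectProperty.homMk (e ≫ δ), hmf⟩
        = φ ⟨ObjectProperty.homMk ((f.hom ≫ e) ≫ δ), c1⟩ := congrArg φ (Subtype.ext as1)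
      _ = φ ⟨ObjectProperty.homMk ((f₂.hom ≫ e) ≫ δ), c2⟩ := key'
      _ = φ ⟨f₂ ≫ ObjectProperty.homMk (e ≫ δ), hmf₂⟩ := congrArg φ (Subtype.ext as2)
end

section
/- Let 𝔖 be a subcategory of a category 𝔏, let (u, u^∞, U) be a matching sequence in (𝔖, 𝔏) whose underlying sequence u is a weak Fraïssé sequence in 𝔖, and let α : a → a' be an 𝔖-arrow. Then the following are equivalent: (i) α is a Ramsey arrow in 𝔖; (ii) α satisfies condition (wA): for every k ∈ ℕ, every finite F ⊆ 𝔏(α,U), and every coloring φ : 𝔏(α,U) → Fin k there is an automorphism e of U in 𝔏 such that φ is constant on e ∘ F; (iii) α satisfies condition (wB): the same as (wA) but with e only required to be an 𝔏-endomorphism of U. -/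
open CategoryTheory

universe v u

/-- A subcategory of a category `L`, given by a predicate on objects and a predicate on
arrows, closed under identities and composition. -/
structure Subcat (L : Type u) [Category.{v} L] where
  Obj : L → Prop
  Hom : ∀ ⦃x y : L⦄, (x ⟶ y) → Prop
  id_mem : ∀ ⦃x : L⦄, Obj x → Hom (𝟙 x)
  comp_mem : ∀ ⦃x y z : L⦄ ⦃f : x ⟶ y⦄ ⦃g : y ⟶ z⦄, Hom f → Hom g → Hom (f ≫ g)
  dom_mem : ∀ ⦃x y : L⦄ ⦃f : x ⟶ y⦄, Hom f → Obj x
  cod_mem : ∀ ⦃x y : L⦄ ⦃f : x ⟶ y⦄, Hom f → Obj y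

variable {L : Type u} [Category.{v} L]

/-- `𝔖(α, b)`: the set of arrows `a ⟶ b` of the form `f ∘ α` where `f : a' ⟶ b` is an
arrow of the subcategory `S`. -/
def Subcat.HomThrough (S : Subcat L) {a a' : L} (α : a ⟶ a') (b : L) : Set (a ⟶ b) :=
  {h | ∃ f : a' ⟶ b, S.Hom f ∧ h = α ≫ f}

/-- `α` is a Ramsey arrow of the subcategory `S`. -/
def Subcat.IsRamseyArrow (S : Subcat L) {a a' : L} (α : a ⟶ a') : Prop :=
  ∀ b : L, S.Obj b → ∀ (k : ℕ) (F : Finset (a ⟶ b)),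
    (F : Set (a ⟶ b)) ⊆ S.HomThrough α b →
    ∃ v : L, S.Obj v ∧ ∀ φ : S.HomThrough α v → Fin k,
      ∃ e : b ⟶ v, S.Hom e ∧ ∀ f ∈ F, ∀ g ∈ F,
        ∀ (hf : f ≫ e ∈ S.HomThrough α v) (hg : g ≫ e ∈ S.HomThrough α v),
          φ ⟨f ≫ e, hf⟩ = φ ⟨g ≫ e, hg⟩

/-- The weak Ramsey property of the subcategory `S`: every `S`-object is the domain of
a Ramsey `S`-arrow. -/
def Subcat.WeakRamsey (S : Subcat L) : Prop :=
  ∀ a : L, S.Obj a → ∃ (a' : L) (α : a ⟶ a'), S.Hom α ∧ S.IsRamseyArrow α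

/-- A coned sequence `(u, u^∞, U)` in `(𝔖, 𝔏)`: a sequence in the subcategory `S`
together with a cone over it in `L` with vertex `U`. -/
structure ConedSeq (L : Type u) [Category.{v} L] (S : Subcat L) where
  u : ℕ → L
  obj_mem : ∀ n, S.Obj (u n)
  bond : ∀ ⦃n m : ℕ⦄, n ≤ m → (u n ⟶ u m)
  bond_mem : ∀ ⦃n m : ℕ⦄ (h : n ≤ m), S.Hom (bond h)
  bond_refl : ∀ n : ℕ, bond (le_refl n) = 𝟙 (u n)
  bond_comp : ∀ ⦃n m p : ℕ⦄ (h₁ : n ≤ m) (h₂ : m ≤ p),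
    bond h₁ ≫ bond h₂ = bond (h₁.trans h₂)
  U : L
  cone : ∀ n : ℕ, u n ⟶ U
  cone_comm : ∀ ⦃n m : ℕ⦄ (h : n ≤ m), bond h ≫ cone m = cone n

namespace ConedSeq

variable {S : Subcat L}

/-- (F1): every `L`-arrow from an `S`-object to `U` factors through the sequence via an
`S`-arrow. -/
def F1 (c : ConedSeq L S) : Prop :=
  ∀ ⦃x : L⦄, S.Obj x → ∀ f : x ⟶ c.U,
    ∃ (n : ℕ) (g : x ⟶ c.u n), S.Hom g ∧ g ≫ c.cone n = f

/-- (F2): factorizations through the sequence are essentially unique. -/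
def F2 (c : ConedSeq L S) : Prop :=
  ∀ ⦃x : L⦄ (n : ℕ) (f f' : x ⟶ c.u n), S.Hom f → S.Hom f' →
    f ≫ c.cone n = f' ≫ c.cone n →
    ∃ (n' : ℕ) (h : n ≤ n'), f ≫ c.bond h = f' ≫ c.bond h

/-- (BF): every zig-zag ("back-and-forth") system of `S`-arrows along cofinal
subsequences is induced by an automorphism of `U` in `L`. -/
def BF (c : ConedSeq L S) : Prop :=
  ∀ (k l : ℕ → ℕ), StrictMono k → StrictMono l →
    ∀ (f : ∀ n : ℕ, c.u (k n) ⟶ c.u (l n)) (g : ∀ n : ℕ, c.u (l n) ⟶ c.u (k (n + 1))),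
      (∀ n, S.Hom (f n)) → (∀ n, S.Hom (g n)) →
      (∀ (n : ℕ) (h : k n ≤ k (n + 1)), f n ≫ g n = c.bond h) →
      (∀ (n : ℕ) (h : l n ≤ l (n + 1)), g n ≫ f (n + 1) = c.bond h) →
      ∃ e : c.U ≅ c.U,
        (∀ n : ℕ, c.cone (k n) ≫ e.hom = f n ≫ c.cone (l n)) ∧
        (∀ n : ℕ, c.cone (l n) ≫ e.inv = g n ≫ c.cone (k (n + 1)))

/-- (H): only the identity automorphism of `U` fixes all the cone maps. -/
def Hsep (c : ConedSeq L S) : Prop :=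
  ∀ e : c.U ≅ c.U, (∀ n : ℕ, c.cone n ≫ e.hom = c.cone n) → e = Iso.refl c.U

/-- A matching sequence: a coned sequence satisfying (F1), (F2), (BF) and (H). -/
def Matching (c : ConedSeq L S) : Prop := c.F1 ∧ c.F2 ∧ c.BF ∧ c.Hsep

/-- The underlying sequence is a weak Fraïssé sequence in `S`: (W0) cofinality and
(W1) weak absorption. -/
def WeakFraisse (c : ConedSeq L S) : Prop :=
  (∀ x : L, S.Obj x → ∃ (n : ℕ) (f : x ⟶ c.u n), S.Hom f) ∧
  (∀ n : ℕ, ∃ (m : ℕ) (hnm : n ≤ m), ∀ ⦃y : L⦄ (f : c.u m ⟶ y), S.Hom f →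
    ∃ (p : ℕ) (hmp : m ≤ p) (g : y ⟶ c.u p), S.Hom g ∧
      c.bond hnm ≫ f ≫ g = c.bond (hnm.trans hmp))

/-- `𝔏(α, U)`: the set of `L`-arrows `a ⟶ U` factoring through `α`. -/
def LHomThrough (c : ConedSeq L S) {a a' : L} (α : a ⟶ a') : Set (a ⟶ c.U) :=
  {h | ∃ f : a' ⟶ c.U, h = α ≫ f}

/-- Condition (wA): every coloring of a finite subset of `𝔏(α, U)` can be made constant
by composing with an automorphism of `U`. -/
def wA (c : ConedSeq L S) {a a' : L} (α : a ⟶ a') : Prop :=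
  ∀ (k : ℕ) (F : Finset (a ⟶ c.U)), (F : Set (a ⟶ c.U)) ⊆ c.LHomThrough α →
    ∀ φ : c.LHomThrough α → Fin k,
      ∃ e : c.U ≅ c.U, ∀ f ∈ F, ∀ g ∈ F,
        ∀ (hf : f ≫ e.hom ∈ c.LHomThrough α) (hg : g ≫ e.hom ∈ c.LHomThrough α),
          φ ⟨f ≫ e.hom, hf⟩ = φ ⟨g ≫ e.hom, hg⟩

/-- Condition (wB): as (wA), but with an arbitrary `L`-endomorphism of `U`. -/
def wB (c : ConedSeq L S) {a a' : L} (α : a ⟶ a') : Prop :=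
  ∀ (k : ℕ) (F : Finset (a ⟶ c.U)), (F : Set (a ⟶ c.U)) ⊆ c.LHomThrough α →
    ∀ φ : c.LHomThrough α → Fin k,
      ∃ e : c.U ⟶ c.U, ∀ f ∈ F, ∀ g ∈ F,
        ∀ (hf : f ≫ e ∈ c.LHomThrough α) (hg : g ≫ e ∈ c.LHomThrough α),
          φ ⟨f ≫ e, hf⟩ = φ ⟨g ≫ e, hg⟩

end ConedSeq

section UFlimSec

lemma exists_uflim {k : ℕ} (𝒰 : Ultrafilter ℕ) (s : ℕ → Fin k) :
    ∃ v, {n | s n = v} ∈ 𝒰 := by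
  have h : (⋃ v ∈ (Set.univ : Set (Fin k)), {n | s n = v}) ∈ 𝒰 := by
    have he : (⋃ v ∈ (Set.univ : Set (Fin k)), {n | s n = v}) = Set.univ := by
      ext n; simp
    rw [he]; exact Filter.univ_mem
  rw [Ultrafilter.finite_biUnion_mem_iff Set.finite_univ] at h
  obtain ⟨v, -, hv⟩ := h
  exact ⟨v, hv⟩

/-- The limit of a sequence in a finite type along an ultrafilter on `ℕ`. -/
noncomputable def UFlim {k : ℕ} (𝒰 : Ultrafilter ℕ) (s : ℕ → Fin k) : Fin k :=
  (exists_uflim 𝒰 s).choose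

lemma UFlim_spec {k : ℕ} (𝒰 : Ultrafilter ℕ) (s : ℕ → Fin k) :
    {n | s n = UFlim 𝒰 s} ∈ 𝒰 :=
  (exists_uflim 𝒰 s).choose_spec

lemma mem_hyper_of_ge (N : ℕ) : {n : ℕ | N ≤ n} ∈ Filter.hyperfilter ℕ := by
  apply Filter.mem_hyperfilter_of_finite_compl
  have h : {n : ℕ | N ≤ n}ᶜ ⊆ Set.Iio N := by intro x hx; simpa using hx
  exact (Set.finite_Iio N).subset h

end UFlimSec

namespace ConedSeq

variable {S : Subcat L}

/-- The absorption property of the pair `(k, m)` coming from (W1). -/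
def Absorbs (c : ConedSeq L S) {k m : ℕ} (hkm : k ≤ m) : Prop :=
  ∀ ⦃y : L⦄ (f : c.u m ⟶ y), S.Hom f →
    ∃ (p : ℕ) (hmp : m ≤ p) (g : y ⟶ c.u p), S.Hom g ∧
      c.bond hkm ≫ f ≫ g = c.bond (hkm.trans hmp)

/-- State of the back-and-forth construction: a "prepared" arrow
`bond hkm ≫ t : u k ⟶ u l` where `(k, m)` is an absorbing pair. -/
structure ZZ (c : ConedSeq L S) where
  k : ℕ
  m : ℕ
  l : ℕ
  hkm : k ≤ m
  habs : c.Absorbs hkm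
  t : c.u m ⟶ c.u l
  ht : S.Hom t

def ZZ.f {c : ConedSeq L S} (z : c.ZZ) : c.u z.k ⟶ c.u z.l := c.bond z.hkm ≫ z.t

lemma ZZ.hf {c : ConedSeq L S} (z : c.ZZ) : S.Hom z.f :=
  S.comp_mem (c.bond_mem _) z.ht

lemma step (c : ConedSeq L S) (habs_all : ∀ n, ∃ (m : ℕ) (h : n ≤ m), c.Absorbs h)
    (z : c.ZZ) :
    ∃ (z' : c.ZZ) (g : c.u z.l ⟶ c.u z'.k),
      S.Hom g ∧ z.k < z'.k ∧ z.l < z'.l ∧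
      (∀ h : z.k ≤ z'.k, z.f ≫ g = c.bond h) ∧
      (∀ h : z.l ≤ z'.l, g ≫ z'.f = c.bond h) := by
  obtain ⟨ml, hlm, habsl⟩ := habs_all z.l
  obtain ⟨k₁', hk₁', gh, hgh, heq₁⟩ := z.habs (z.t ≫ c.bond hlm)
    (S.comp_mem z.ht (c.bond_mem _))
  set k₁ := max k₁' (max z.k z.l) + 1 with hk₁def
  have hk : k₁' ≤ k₁ := by omega
  have hzk : z.k < k₁ := by omega
  obtain ⟨m₁, hk₁m₁, habs₁⟩ := habs_all k₁
  obtain ⟨l₁', hl₁', fh, hfh, heq₂⟩ := habsl ((gh ≫ c.bond hk) ≫ c.bond hk₁m₁)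
    (S.comp_mem (S.comp_mem hgh (c.bond_mem _)) (c.bond_mem _))
  set l₁ := max l₁' z.l + 1 with hl₁def
  have hl : l₁' ≤ l₁ := by omega
  have hzl₁ : z.l < l₁ := by omega
  refine ⟨⟨k₁, m₁, l₁, hk₁m₁, habs₁, fh ≫ c.bond hl, S.comp_mem hfh (c.bond_mem _)⟩,
    c.bond hlm ≫ (gh ≫ c.bond hk), S.comp_mem (c.bond_mem _) (S.comp_mem hgh (c.bond_mem _)),
    hzk, hzl₁, ?_, ?_⟩
  · intro h
    have h2 : (c.bond z.hkm ≫ (z.t ≫ c.bond hlm) ≫ gh) ≫ c.bond hk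
        = c.bond (z.hkm.trans hk₁') ≫ c.bond hk := by rw [heq₁]
    calc z.f ≫ c.bond hlm ≫ gh ≫ c.bond hk
        = (c.bond z.hkm ≫ (z.t ≫ c.bond hlm) ≫ gh) ≫ c.bond hk := by
          simp [ZZ.f, Category.assoc]
      _ = c.bond (z.hkm.trans hk₁') ≫ c.bond hk := h2
      _ = c.bond h := c.bond_comp _ _
  · intro h
    show (c.bond hlm ≫ gh ≫ c.bond hk) ≫ c.bond hk₁m₁ ≫ fh ≫ c.bond hl = c.bond h
    calc (c.bond hlm ≫ gh ≫ c.bond hk) ≫ c.bond hk₁m₁ ≫ fh ≫ c.bond hl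
        = (c.bond hlm ≫ ((gh ≫ c.bond hk) ≫ c.bond hk₁m₁) ≫ fh) ≫ c.bond hl := by
          simp [Category.assoc]
      _ = c.bond (hlm.trans hl₁') ≫ c.bond hl := by rw [heq₂]
      _ = c.bond h := c.bond_comp _ _

noncomputable def nextZ (c : ConedSeq L S)
    (habs_all : ∀ n, ∃ (m : ℕ) (h : n ≤ m), c.Absorbs h) (z : c.ZZ) :
    Σ' (z' : c.ZZ) (g : c.u z.l ⟶ c.u z'.k),
      S.Hom g ∧ z.k < z'.k ∧ z.l < z'.l ∧
      (∀ h : z.k ≤ z'.k, z.f ≫ g = c.bond h) ∧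
      (∀ h : z.l ≤ z'.l, g ≫ z'.f = c.bond h) :=
  Classical.choice (by
    obtain ⟨z', g, h₁, h₂, h₃, h₄, h₅⟩ := step c habs_all z
    exact ⟨⟨z', g, h₁, h₂, h₃, h₄, h₅⟩⟩)

noncomputable def chain (c : ConedSeq L S)
    (habs_all : ∀ n, ∃ (m : ℕ) (h : n ≤ m), c.Absorbs h) (z₀ : c.ZZ) : ℕ → c.ZZ
  | 0 => z₀
  | n + 1 => (nextZ c habs_all (chain c habs_all z₀ n)).1

/-- Realization lemma: any prepared arrow from the sequence to itself is induced by an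
automorphism of `U` (via the back-and-forth property (BF)). -/
lemma realize (c : ConedSeq L S) (hBF : c.BF)
    (habs_all : ∀ n, ∃ (m : ℕ) (h : n ≤ m), c.Absorbs h)
    {n₀ m p : ℕ} (hnm : n₀ ≤ m) (habs : c.Absorbs hnm)
    (s : c.u m ⟶ c.u p) (hs : S.Hom s) :
    ∃ e : c.U ≅ c.U, c.cone n₀ ≫ e.hom = c.bond hnm ≫ s ≫ c.cone p := by
  set z₀ : c.ZZ := ⟨n₀, m, p, hnm, habs, s, hs⟩ with hz₀
  set Z : ℕ → c.ZZ := chain c habs_all z₀ with hZ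
  set k : ℕ → ℕ := fun n => (Z n).k with hk
  set l : ℕ → ℕ := fun n => (Z n).l with hl
  have hkmono : StrictMono k := strictMono_nat_of_lt_succ fun n =>
    (nextZ c habs_all (Z n)).2.2.2.1
  have hlmono : StrictMono l := strictMono_nat_of_lt_succ fun n =>
    (nextZ c habs_all (Z n)).2.2.2.2.1
  obtain ⟨e, he1, -⟩ := hBF k l hkmono hlmono (fun n => (Z n).f)
    (fun n => (nextZ c habs_all (Z n)).2.1)
    (fun n => (Z n).hf)
    (fun n => (nextZ c habs_all (Z n)).2.2.1)
    (fun n h => (nextZ c habs_all (Z n)).2.2.2.2.2.1 h)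
    (fun n h => (nextZ c habs_all (Z n)).2.2.2.2.2.2 h)
  refine ⟨e, ?_⟩
  have h0 := he1 0
  have hf0 : (Z 0).f = c.bond hnm ≫ s := rfl
  rw [hf0] at h0
  have h1 : c.cone n₀ ≫ e.hom = (c.bond hnm ≫ s) ≫ c.cone p := h0
  simpa [Category.assoc] using h1

/-- (i) ⇒ (ii): a Ramsey arrow satisfies (wA). -/
lemma ramsey_to_wA (c : ConedSeq L S) (hF1 : c.F1) (hBF : c.BF)
    (hwf : c.WeakFraisse) {a a' : L} (α : a ⟶ a') (hα : S.Hom α)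
    (hR : S.IsRamseyArrow α) : c.wA α := by
  classical
  intro k F hFsub φ
  have ha' : S.Obj a' := S.cod_mem hα
  have habs_all : ∀ n, ∃ (m : ℕ) (h : n ≤ m), c.Absorbs h := hwf.2
  have fact : ∀ f ∈ F, ∃ (n : ℕ) (g : a' ⟶ c.u n), S.Hom g ∧ f = α ≫ g ≫ c.cone n := by
    intro f hf
    obtain ⟨ft, hfe⟩ := hFsub hf
    obtain ⟨n, g, hg, hgc⟩ := hF1 ha' ft
    exact ⟨n, g, hg, by rw [hfe, ← hgc]⟩
  choose nn gg hgg hfac using fact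
  set n₀ := F.attach.sup (fun x => nn x.1 x.2) with hn₀
  have hle : ∀ (f) (hf : f ∈ F), nn f hf ≤ n₀ := fun f hf =>
    Finset.le_sup (f := fun x => nn x.1 x.2) (Finset.mem_attach F ⟨f, hf⟩)
  obtain ⟨m, hnm, habs⟩ := habs_all n₀
  set lift : ∀ f ∈ F, (a' ⟶ c.u m) := fun f hf =>
    (gg f hf ≫ c.bond (hle f hf)) ≫ c.bond hnm with hliftdef
  have hliftS : ∀ (f) (hf : f ∈ F), S.Hom (lift f hf) := fun f hf =>
    S.comp_mem (S.comp_mem (hgg f hf) (c.bond_mem _)) (c.bond_mem _)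
  set F' : Finset (a ⟶ c.u m) := F.attach.image (fun x => α ≫ lift x.1 x.2) with hF'
  have hF'sub : (F' : Set (a ⟶ c.u m)) ⊆ S.HomThrough α (c.u m) := by
    intro x hx
    rw [hF'] at hx
    obtain ⟨⟨f, hf⟩, -, rfl⟩ := Finset.mem_image.mp hx
    exact ⟨lift f hf, hliftS f hf, rfl⟩
  obtain ⟨v, hv, hRam⟩ := hR (c.u m) (c.obj_mem m) k F' hF'sub
  obtain ⟨q, j, hj⟩ := hwf.1 v hv
  set ψ : S.HomThrough α v → Fin k := fun x => φ ⟨x.1 ≫ (j ≫ c.cone q), by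
    obtain ⟨t, ht, hte⟩ := x.2
    exact ⟨t ≫ (j ≫ c.cone q), by rw [hte, Category.assoc]⟩⟩ with hψ
  obtain ⟨eR, heR, hconst⟩ := hRam ψ
  obtain ⟨eU, heU⟩ := c.realize hBF habs_all hnm habs (eR ≫ j) (S.comp_mem heR hj)
  refine ⟨eU, ?_⟩
  have memF' : ∀ (f) (hf : f ∈ F), α ≫ lift f hf ∈ F' := by
    intro f hf
    rw [hF']
    exact Finset.mem_image.mpr ⟨⟨f, hf⟩, Finset.mem_attach _ _, rfl⟩
  have memS : ∀ (f) (hf : f ∈ F), (α ≫ lift f hf) ≫ eR ∈ S.HomThrough α v :=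
    fun f hf => ⟨lift f hf ≫ eR, S.comp_mem (hliftS f hf) heR, by rw [Category.assoc]⟩
  have key : ∀ (f) (hf : f ∈ F) (hm : f ≫ eU.hom ∈ c.LHomThrough α),
      φ ⟨f ≫ eU.hom, hm⟩ = ψ ⟨(α ≫ lift f hf) ≫ eR, memS f hf⟩ := by
    intro f hf hm
    apply congrArg φ
    apply Subtype.ext
    show f ≫ eU.hom = ((α ≫ lift f hf) ≫ eR) ≫ (j ≫ c.cone q)
    conv_lhs => rw [hfac f hf]
    rw [← c.cone_comm (hle f hf)]
    simp only [Category.assoc]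
    rw [heU]
    simp only [hliftdef, Category.assoc]
  intro f hf g hg hfm hgm
  calc φ ⟨f ≫ eU.hom, hfm⟩ = ψ ⟨(α ≫ lift f hf) ≫ eR, memS f hf⟩ := key f hf hfm
    _ = ψ ⟨(α ≫ lift g hg) ≫ eR, memS g hg⟩ :=
        hconst _ (memF' f hf) _ (memF' g hg) (memS f hf) (memS g hg)
    _ = φ ⟨g ≫ eU.hom, hgm⟩ := (key g hg hgm).symm

/-- (ii) ⇒ (iii). -/
lemma wA_to_wB (c : ConedSeq L S) {a a' : L} {α : a ⟶ a'} (h : c.wA α) : c.wB α := by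
  intro k F hFsub φ
  obtain ⟨e, he⟩ := h k F hFsub φ
  exact ⟨e.hom, he⟩

/-- (iii) ⇒ (i): condition (wB) implies that `α` is a Ramsey arrow. -/
lemma wB_to_ramsey (c : ConedSeq L S) (hF1 : c.F1) (hF2 : c.F2)
    (hwf0 : ∀ x : L, S.Obj x → ∃ (n : ℕ) (f : x ⟶ c.u n), S.Hom f)
    {a a' : L} (α : a ⟶ a') (hα : S.Hom α)
    (hB : c.wB α) : S.IsRamseyArrow α := by
  classical
  intro b hb k F hFsub
  by_contra hcon
  push_neg at hcon
  choose φbad hbad using fun n => hcon (c.u n) (c.obj_mem n)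
  set 𝒰 := Filter.hyperfilter ℕ with h𝒰
  have ha' : S.Obj a' := S.cod_mem hα
  have fact : ∀ (h : a ⟶ c.U), h ∈ c.LHomThrough α →
      ∃ (q : ℕ) (g : a' ⟶ c.u q), S.Hom g ∧ h = α ≫ g ≫ c.cone q := by
    intro h hh
    obtain ⟨ft, hfe⟩ := hh
    obtain ⟨q, g, hg, hgc⟩ := hF1 ha' ft
    exact ⟨q, g, hg, by rw [hfe, ← hgc]⟩
  choose qq gg hgg hqfac using fact
  set seq : ∀ (h : a ⟶ c.U), h ∈ c.LHomThrough α → ℕ → Fin k := fun h hh i =>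
    if hle : qq h hh ≤ i then
      φbad i ⟨α ≫ (gg h hh ≫ c.bond hle),
        ⟨gg h hh ≫ c.bond hle, S.comp_mem (hgg h hh) (c.bond_mem _), rfl⟩⟩
    else
      φbad (qq h hh) ⟨α ≫ gg h hh, ⟨gg h hh, hgg h hh, rfl⟩⟩
    with hseqdef
  have hseq_eval : ∀ (h : a ⟶ c.U) (hh : h ∈ c.LHomThrough α) (i : ℕ)
      (hle : qq h hh ≤ i),
      seq h hh i = φbad i ⟨α ≫ (gg h hh ≫ c.bond hle),
        ⟨gg h hh ≫ c.bond hle, S.comp_mem (hgg h hh) (c.bond_mem _), rfl⟩⟩ := by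
    intro h hh i hle
    simp only [hseqdef]
    exact dif_pos hle
  set ψ : c.LHomThrough α → Fin k := fun x => UFlim 𝒰 (seq x.1 x.2) with hψ
  obtain ⟨nb, ib, hib⟩ := hwf0 b hb
  set F_U : Finset (a ⟶ c.U) := F.image (fun f => f ≫ (ib ≫ c.cone nb)) with hFU
  have hFUsub : (F_U : Set (a ⟶ c.U)) ⊆ c.LHomThrough α := by
    intro x hx
    rw [hFU] at hx
    obtain ⟨f, hf, rfl⟩ := Finset.mem_image.mp hx
    obtain ⟨ft, hft, hfe⟩ := hFsub hf
    exact ⟨ft ≫ (ib ≫ c.cone nb), by rw [hfe, Category.assoc]⟩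
  obtain ⟨eU, heU⟩ := hB k F_U hFUsub ψ
  obtain ⟨r, d, hd, hdw⟩ := hF1 hb ((ib ≫ c.cone nb) ≫ eU)
  have memL : ∀ (f) (hf : f ∈ F), (f ≫ (ib ≫ c.cone nb)) ≫ eU ∈ c.LHomThrough α := by
    intro f hf
    obtain ⟨ft, hft, hfe⟩ := hFsub hf
    exact ⟨ft ≫ ((ib ≫ c.cone nb) ≫ eU), by rw [hfe]; simp only [Category.assoc]⟩
  have main : ∀ (f) (hf : f ∈ F),
      ∃ N : ℕ, r ≤ N ∧ qq _ (memL f hf) ≤ N ∧ ∀ (i : ℕ) (hNi : N ≤ i) (hri : r ≤ i)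
        (hqi : qq _ (memL f hf) ≤ i)
        (hm : f ≫ (d ≫ c.bond hri) ∈ S.HomThrough α (c.u i)),
        φbad i ⟨f ≫ (d ≫ c.bond hri), hm⟩
          = seq ((f ≫ (ib ≫ c.cone nb)) ≫ eU) (memL f hf) i := by
    intro f hf
    obtain ⟨ft, hft, hfe⟩ := hFsub hf
    have hqN₀ : qq _ (memL f hf) ≤ max (qq _ (memL f hf)) r := le_max_left _ _
    have hrN₀ : r ≤ max (qq _ (memL f hf)) r := le_max_right _ _
    have hcone1 : (α ≫ (gg _ (memL f hf) ≫ c.bond hqN₀)) ≫ c.cone _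
        = (f ≫ (ib ≫ c.cone nb)) ≫ eU := by
      conv_rhs => rw [hqfac _ (memL f hf)]
      simp only [Category.assoc, c.cone_comm]
    have hcone2 : (α ≫ ((ft ≫ d) ≫ c.bond hrN₀)) ≫ c.cone _
        = (f ≫ (ib ≫ c.cone nb)) ≫ eU := by
      have h1 : (α ≫ ((ft ≫ d) ≫ c.bond hrN₀)) ≫ c.cone _
          = α ≫ ft ≫ (d ≫ c.cone r) := by
        simp only [Category.assoc, c.cone_comm]
      rw [h1, hdw]
      conv_rhs => rw [hfe]
      simp only [Category.assoc]
    obtain ⟨N, hN₀N, heqN⟩ := hF2 (max (qq _ (memL f hf)) r)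
      (α ≫ (gg _ (memL f hf) ≫ c.bond hqN₀))
      (α ≫ ((ft ≫ d) ≫ c.bond hrN₀))
      (S.comp_mem hα (S.comp_mem (hgg _ _) (c.bond_mem _)))
      (S.comp_mem hα (S.comp_mem (S.comp_mem hft hd) (c.bond_mem _)))
      (by rw [hcone1, hcone2])
    refine ⟨N, hrN₀.trans hN₀N, hqN₀.trans hN₀N, ?_⟩
    intro i hNi hri hqi hm
    have harrow : f ≫ (d ≫ c.bond hri) = α ≫ (gg _ (memL f hf) ≫ c.bond hqi) := by
      have e1 : α ≫ (gg _ (memL f hf) ≫ c.bond hqi)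
          = ((α ≫ (gg _ (memL f hf) ≫ c.bond hqN₀)) ≫ c.bond hN₀N) ≫ c.bond hNi := by
        simp only [Category.assoc, c.bond_comp]
      have e2 : f ≫ (d ≫ c.bond hri)
          = ((α ≫ ((ft ≫ d) ≫ c.bond hrN₀)) ≫ c.bond hN₀N) ≫ c.bond hNi := by
        conv_lhs => rw [hfe]
        simp only [Category.assoc, c.bond_comp]
      rw [e2, e1, heqN]
    rw [hseq_eval _ (memL f hf) i hqi]
    exact congrArg (φbad i) (Subtype.ext harrow)
  choose Nf hNfr hNfq hNf using main
  set Nmax := max r (F.attach.sup fun x => Nf x.1 x.2) with hNmax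
  have hbig : {i | Nmax ≤ i} ∈ 𝒰 := mem_hyper_of_ge Nmax
  have hA : ∀ x : {x // x ∈ F},
      {i | seq ((x.1 ≫ (ib ≫ c.cone nb)) ≫ eU) (memL x.1 x.2) i
        = ψ ⟨(x.1 ≫ (ib ≫ c.cone nb)) ≫ eU, memL x.1 x.2⟩} ∈ 𝒰 := by
    intro x
    exact UFlim_spec 𝒰 (seq ((x.1 ≫ (ib ≫ c.cone nb)) ≫ eU) (memL x.1 x.2))
  have hT : ({i | Nmax ≤ i} ∩ ⋂ x ∈ F.attach,
      {i | seq ((x.1 ≫ (ib ≫ c.cone nb)) ≫ eU) (memL x.1 x.2) i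
        = ψ ⟨(x.1 ≫ (ib ≫ c.cone nb)) ≫ eU, memL x.1 x.2⟩}) ∈ 𝒰 := by
    refine Filter.inter_mem hbig ?_
    rw [Filter.biInter_finset_mem]
    intro x _
    exact hA x
  obtain ⟨i, hiT⟩ := Filter.nonempty_of_mem hT
  obtain ⟨hiN, hiA⟩ := hiT
  have hiAmem : ∀ x : {x // x ∈ F},
      seq ((x.1 ≫ (ib ≫ c.cone nb)) ≫ eU) (memL x.1 x.2) i
        = ψ ⟨(x.1 ≫ (ib ≫ c.cone nb)) ≫ eU, memL x.1 x.2⟩ := by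
    intro x
    have := Set.mem_iInter₂.mp hiA x (Finset.mem_attach _ _)
    exact this
  have hri : r ≤ i := le_trans (le_max_left _ _) hiN
  have hNi : ∀ (f) (hf : f ∈ F), Nf f hf ≤ i := by
    intro f hf
    exact le_trans (le_trans (Finset.le_sup (f := fun x => Nf x.1 x.2)
      (Finset.mem_attach F ⟨f, hf⟩)) (le_max_right r _)) hiN
  have val : ∀ (f) (hf : f ∈ F) (hm : f ≫ (d ≫ c.bond hri) ∈ S.HomThrough α (c.u i)),
      φbad i ⟨f ≫ (d ≫ c.bond hri), hm⟩
        = ψ ⟨(f ≫ (ib ≫ c.cone nb)) ≫ eU, memL f hf⟩ := by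
    intro f hf hm
    rw [hNf f hf i (hNi f hf) hri ((hNfq f hf).trans (hNi f hf)) hm]
    exact hiAmem ⟨f, hf⟩
  obtain ⟨f, hf, g, hg, hmf, hmg, hne⟩ :=
    hbad i (d ≫ c.bond hri) (S.comp_mem hd (c.bond_mem _))
  apply hne
  have memFU : ∀ (f) (hf : f ∈ F), f ≫ (ib ≫ c.cone nb) ∈ F_U := by
    intro f hf
    rw [hFU]
    exact Finset.mem_image.mpr ⟨f, hf, rfl⟩
  calc φbad i ⟨f ≫ (d ≫ c.bond hri), hmf⟩
      = ψ ⟨(f ≫ (ib ≫ c.cone nb)) ≫ eU, memL f hf⟩ := val f hf hmf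
    _ = ψ ⟨(g ≫ (ib ≫ c.cone nb)) ≫ eU, memL g hg⟩ :=
        heU _ (memFU f hf) _ (memFU g hg) (memL f hf) (memL g hg)
    _ = φbad i ⟨g ≫ (d ≫ c.bond hri), hmg⟩ := (val g hg hmg).symm

end ConedSeq

/-- Let `(u, u^∞, U)` be a matching sequence in `(𝔖, 𝔏)` whose underlying sequence is a
weak Fraïssé sequence in `𝔖`, and let `α` be an `𝔖`-arrow. Then the following are
equivalent: (i) `α` is a Ramsey arrow in `𝔖`; (ii) `α` satisfies (wA); (iii) `α`
satisfies (wB). -/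
theorem ramseyArrow_iff_wA_iff_wB {L : Type u} [Category.{v} L] {S : Subcat L}
    (c : ConedSeq L S) (hmatch : c.Matching) (hwf : c.WeakFraisse)
    {a a' : L} (α : a ⟶ a') (hα : S.Hom α) :
    (S.IsRamseyArrow α ↔ c.wA α) ∧ (c.wA α ↔ c.wB α) := by
  obtain ⟨hF1, hF2, hBF, hH⟩ := hmatch
  have hA_of_R : S.IsRamseyArrow α → c.wA α := fun h =>
    ConedSeq.ramsey_to_wA c hF1 hBF hwf α hα h
  have hB_of_A : c.wA α → c.wB α := fun h => ConedSeq.wA_to_wB c h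
  have hR_of_B : c.wB α → S.IsRamseyArrow α := fun h =>
    ConedSeq.wB_to_ramsey c hF1 hF2 hwf.1 α hα h
  exact ⟨⟨hA_of_R, fun h => hR_of_B (hB_of_A h)⟩,
    ⟨hB_of_A, fun h => hA_of_R (hR_of_B h)⟩⟩
end

section
/- Let 𝔖 ⊆ 𝔖' be an amalgamation extension, and suppose the full subcategory am(𝔖') of amalgamable objects of 𝔖' is cofinal in 𝔖'. Then 𝔖 has the weak Ramsey property if and only if am(𝔖') has the Ramsey property. -/
open CategoryTheory

universe v u

/-- The Ramsey property: every identity arrow is a Ramsey arrow. -/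
def RamseyProp (C : Type u) [Category.{v} C] : Prop :=
  ∀ a : C, IsRamseyArrow (𝟙 a)

section Helpers

variable {C : Type u} [Category.{v} C]

private def subHomToC {C : Type u} [Category.{v} C] {Q : C → Prop}
    {a a' : ObjectProperty.FullSubcategory Q} (α : a ⟶ a') : a.obj ⟶ a'.obj := α.hom

private def homToSub {C : Type u} [Category.{v} C] {Q : C → Prop}
    {a a' : C} (ha : Q a) (ha' : Q a') (α : a ⟶ a') :
    (⟨a, ha⟩ : ObjectProperty.FullSubcategory Q) ⟶ ⟨a', ha'⟩ := ObjectProperty.homMk α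

private lemma phi_congr {X : Type*} {k : ℕ} {s : Set X} (φ : s → Fin k)
    {x y : X} (hx : x ∈ s) (hy : y ∈ s) (h : x = y) :
    φ ⟨x, hx⟩ = φ ⟨y, hy⟩ := by subst h; rfl

private lemma mem_homThrough_id {a b : C} (h : a ⟶ b) : h ∈ HomThrough (𝟙 a) b :=
  ⟨h, by simp⟩

private lemma isRamseyArrow_precomp {a₀ a a' : C} (γ : a₀ ⟶ a) {α : a ⟶ a'}
    (hα : IsRamseyArrow α) : IsRamseyArrow (γ ≫ α) := by
  classical
  intro b k F hF
  choose g hg using fun f : {x // x ∈ F} => hF f.2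
  have hsub : ((F.attach.image fun f => α ≫ g f : Finset (a ⟶ b)) : Set (a ⟶ b)) ⊆
      HomThrough α b := by
    intro x hx
    simp only [Finset.coe_image, Set.mem_image, Finset.mem_coe, Finset.mem_attach] at hx
    obtain ⟨f, -, rfl⟩ := hx
    exact ⟨g f, rfl⟩
  obtain ⟨v, hv⟩ := hα b k (F.attach.image fun f => α ≫ g f) hsub
  refine ⟨v, fun φ => ?_⟩
  set ψ : HomThrough α v → Fin k := fun h =>
    φ ⟨γ ≫ h.1, by obtain ⟨f, hf⟩ := h.2; exact ⟨f, by rw [hf]; simp⟩⟩ with hψ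
  obtain ⟨e, he⟩ := hv ψ
  refine ⟨e, fun f hf f' hf' hfe hf'e => ?_⟩
  have m1 : (α ≫ g ⟨f, hf⟩) ≫ e ∈ HomThrough α v := ⟨g ⟨f, hf⟩ ≫ e, by simp⟩
  have m2 : (α ≫ g ⟨f', hf'⟩) ≫ e ∈ HomThrough α v := ⟨g ⟨f', hf'⟩ ≫ e, by simp⟩
  have e1 : f ≫ e = γ ≫ ((α ≫ g ⟨f, hf⟩) ≫ e) := by
    conv_lhs => rw [show f = (γ ≫ α) ≫ g ⟨f, hf⟩ from hg ⟨f, hf⟩]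
    simp
  have e2 : f' ≫ e = γ ≫ ((α ≫ g ⟨f', hf'⟩) ≫ e) := by
    conv_lhs => rw [show f' = (γ ≫ α) ≫ g ⟨f', hf'⟩ from hg ⟨f', hf'⟩]
    simp
  have mi1 : (α ≫ g ⟨f, hf⟩) ∈ F.attach.image fun f => α ≫ g f :=
    Finset.mem_image_of_mem _ (Finset.mem_attach _ _)
  have mi2 : (α ≫ g ⟨f', hf'⟩) ∈ F.attach.image fun f => α ≫ g f :=
    Finset.mem_image_of_mem _ (Finset.mem_attach _ _)
  calc φ ⟨f ≫ e, hfe⟩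
      = ψ ⟨(α ≫ g ⟨f, hf⟩) ≫ e, m1⟩ := phi_congr φ _ _ e1
    _ = ψ ⟨(α ≫ g ⟨f', hf'⟩) ≫ e, m2⟩ := he _ mi1 _ mi2 m1 m2
    _ = φ ⟨f' ≫ e, hf'e⟩ := (phi_congr φ _ _ e2).symm

private lemma isRamseyArrow_postcomp {a a' a'' : C} {α : a ⟶ a'} (β : a' ⟶ a'')
    (hα : IsRamseyArrow α) : IsRamseyArrow (α ≫ β) := by
  classical
  intro b k F hF
  match k with
  | 0 =>
    exact ⟨b, fun φ => ⟨𝟙 b, fun f hf g hg hfe hge => (φ ⟨f ≫ 𝟙 b, hfe⟩).elim0⟩⟩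
  | k + 1 =>
    have hF' : (F : Set (a ⟶ b)) ⊆ HomThrough α b := by
      intro f hf
      obtain ⟨t, ht⟩ := hF hf
      exact ⟨β ≫ t, by rw [ht]; simp⟩
    obtain ⟨v, hv⟩ := hα b (k + 1) F hF'
    refine ⟨v, fun φ => ?_⟩
    set ψ : HomThrough α v → Fin (k + 1) := fun h =>
      if hm : h.1 ∈ HomThrough (α ≫ β) v then φ ⟨h.1, hm⟩ else 0 with hψ
    obtain ⟨e, he⟩ := hv ψ
    refine ⟨e, fun f hf g hg hfe hge => ?_⟩
    have m1 : f ≫ e ∈ HomThrough α v := by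
      obtain ⟨t, ht⟩ := hF hf
      exact ⟨β ≫ t ≫ e, by rw [ht]; simp⟩
    have m2 : g ≫ e ∈ HomThrough α v := by
      obtain ⟨t, ht⟩ := hF hg
      exact ⟨β ≫ t ≫ e, by rw [ht]; simp⟩
    have v1 : φ ⟨f ≫ e, hfe⟩ = ψ ⟨f ≫ e, m1⟩ := by
      simp only [hψ, dif_pos hfe]
    have v2 : φ ⟨g ≫ e, hge⟩ = ψ ⟨g ≫ e, m2⟩ := by
      simp only [hψ, dif_pos hge]
    rw [v1, v2]
    exact he f hf g hg m1 m2

private lemma cocone_of_amalgamable {a c b : C} (ha : Amalgamable (𝟙 a)) (β : a ⟶ c)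
    (F : Finset (a ⟶ b)) :
    ∃ (d : C) (u : b ⟶ d), ∀ f ∈ F, ∃ gf : c ⟶ d, β ≫ gf = f ≫ u := by
  classical
  induction F using Finset.induction_on with
  | empty => exact ⟨b, 𝟙 b, by simp⟩
  | insert f₀ F' hf₀ ih =>
    obtain ⟨d, u, hd⟩ := ih
    obtain ⟨w, β', r, hw⟩ := ha β (f₀ ≫ u)
    simp only [Category.id_comp] at hw
    refine ⟨w, u ≫ r, fun f hf => ?_⟩
    rcases Finset.mem_insert.1 hf with rfl | hf
    · exact ⟨β', by rw [hw]; simp⟩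
    · obtain ⟨gf, hgf⟩ := hd f hf
      exact ⟨gf ≫ r, by rw [← Category.assoc, hgf, Category.assoc]⟩

private lemma isRamseyArrow_id_of_amalgamable {a c : C} (ha : Amalgamable (𝟙 a))
    {β : a ⟶ c} (hβ : IsRamseyArrow β) : IsRamseyArrow (𝟙 a) := by
  classical
  intro b k F _
  obtain ⟨d, u, hd⟩ := cocone_of_amalgamable ha β F
  choose g hg using hd
  have hsub : ((F.image fun f => f ≫ u : Finset (a ⟶ d)) : Set (a ⟶ d)) ⊆
      HomThrough β d := by
    intro x hx
    simp only [Finset.coe_image, Set.mem_image, Finset.mem_coe] at hx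
    obtain ⟨f, hf, rfl⟩ := hx
    exact ⟨g f hf, (hg f hf).symm⟩
  obtain ⟨v, hv⟩ := hβ d k (F.image fun f => f ≫ u) hsub
  refine ⟨v, fun φ => ?_⟩
  set ψ : HomThrough β v → Fin k := fun h => φ ⟨h.1, mem_homThrough_id _⟩ with hψ
  obtain ⟨e, he⟩ := hv ψ
  refine ⟨u ≫ e, fun f hf f' hf' hfe hf'e => ?_⟩
  have m1 : (f ≫ u) ≫ e ∈ HomThrough β v :=
    ⟨g f hf ≫ e, by rw [← Category.assoc, ← hg f hf, Category.assoc]⟩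
  have m2 : (f' ≫ u) ≫ e ∈ HomThrough β v :=
    ⟨g f' hf' ≫ e, by rw [← Category.assoc, ← hg f' hf', Category.assoc]⟩
  calc φ ⟨f ≫ u ≫ e, hfe⟩
      = ψ ⟨(f ≫ u) ≫ e, m1⟩ := phi_congr φ _ _ (by simp)
    _ = ψ ⟨(f' ≫ u) ≫ e, m2⟩ :=
        he _ (Finset.mem_image_of_mem _ hf) _ (Finset.mem_image_of_mem _ hf') m1 m2
    _ = φ ⟨f' ≫ u ≫ e, hf'e⟩ := phi_congr φ _ _ (by simp)

/-- Transfer a Ramsey arrow from the ambient category down to a cofinal full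
subcategory. -/
private lemma isRamseyArrow_fullSub {Q : C → Prop}
    (hQ : ∀ x : C, ∃ y : C, Q y ∧ Nonempty (x ⟶ y))
    {a a' : ObjectProperty.FullSubcategory Q} (α : a ⟶ a')
    (hα : IsRamseyArrow (subHomToC α)) :
    IsRamseyArrow α := by
  classical
  intro b k F hF
  have hF' : ((F.image fun f => f.hom : Finset (a.obj ⟶ b.obj)) : Set (a.obj ⟶ b.obj)) ⊆
      HomThrough (subHomToC α) b.obj := by
    intro x hx
    simp only [Finset.coe_image, Set.mem_image, Finset.mem_coe] at hx
    obtain ⟨f, hf, rfl⟩ := hx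
    obtain ⟨t, ht⟩ := hF hf
    exact ⟨t.hom, by rw [ht]; simp [subHomToC]⟩
  obtain ⟨v, hv⟩ := hα b.obj k _ hF'
  obtain ⟨v', hQv', ⟨m⟩⟩ := hQ v
  refine ⟨⟨v', hQv'⟩, fun φ => ?_⟩
  have hmem : ∀ h : a.obj ⟶ v, h ∈ HomThrough (subHomToC α) v →
      ((ObjectProperty.homMk (h ≫ m) : a ⟶ (⟨v', hQv'⟩ : ObjectProperty.FullSubcategory Q)) ∈
        HomThrough α (⟨v', hQv'⟩ : ObjectProperty.FullSubcategory Q)) := by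
    rintro h ⟨f, rfl⟩
    exact ⟨ObjectProperty.homMk (f ≫ m), by ext; simp [subHomToC]⟩
  obtain ⟨e, he⟩ := hv (fun h => φ ⟨_, hmem h.1 h.2⟩)
  refine ⟨ObjectProperty.homMk (e ≫ m), fun f hf f' hf' hfe hf'e => ?_⟩
  have m1 : (f.hom ≫ e : a.obj ⟶ v) ∈ HomThrough (subHomToC α) v := by
    obtain ⟨t, ht⟩ := hF' (Finset.mem_image_of_mem _ hf)
    exact ⟨(t ≫ e : a'.obj ⟶ v), by rw [ht]; simp⟩
  have m2 : (f'.hom ≫ e : a.obj ⟶ v) ∈ HomThrough (subHomToC α) v := by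
    obtain ⟨t, ht⟩ := hF' (Finset.mem_image_of_mem _ hf')
    exact ⟨(t ≫ e : a'.obj ⟶ v), by rw [ht]; simp⟩
  calc φ ⟨f ≫ ObjectProperty.homMk (e ≫ m), hfe⟩
      = φ ⟨_, hmem _ m1⟩ := phi_congr φ _ _ (by ext; simp)
    _ = φ ⟨_, hmem _ m2⟩ :=
        he _ (Finset.mem_image_of_mem _ hf) _ (Finset.mem_image_of_mem _ hf') m1 m2
    _ = φ ⟨f' ≫ ObjectProperty.homMk (e ≫ m), hf'e⟩ := phi_congr φ _ _ (by ext; simp)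

/-- Transfer a Ramsey arrow from a cofinal full subcategory up to the ambient
category. -/
private lemma isRamseyArrow_of_fullSub {Q : C → Prop}
    (hQ : ∀ x : C, ∃ y : C, Q y ∧ Nonempty (x ⟶ y))
    {a a' : C} (ha : Q a) (ha' : Q a') (α : a ⟶ a')
    (hα : IsRamseyArrow ((homToSub ha ha' α))) :
    IsRamseyArrow α := by
  classical
  intro b k F hF
  obtain ⟨t, hQt, ⟨m⟩⟩ := hQ b
  let G : Finset ((⟨a, ha⟩ : ObjectProperty.FullSubcategory Q) ⟶ ⟨t, hQt⟩) :=
    F.image fun f => ObjectProperty.homMk (f ≫ m)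
  have hsub : (G : Set _) ⊆ HomThrough ((homToSub ha ha' α))
        (⟨t, hQt⟩ : ObjectProperty.FullSubcategory Q) := by
    intro x hx
    simp only [G, Finset.coe_image, Set.mem_image, Finset.mem_coe] at hx
    obtain ⟨f, hf, rfl⟩ := hx
    obtain ⟨g, hg⟩ := hF hf
    exact ⟨ObjectProperty.homMk (g ≫ m), by ext; simp [homToSub, hg]⟩
  obtain ⟨v, hv⟩ := hα ⟨t, hQt⟩ k G hsub
  refine ⟨v.obj, fun φ => ?_⟩
  have hmem : ∀ h : (⟨a, ha⟩ : ObjectProperty.FullSubcategory Q) ⟶ v,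
      h ∈ HomThrough ((homToSub ha ha' α)) v →
      h.hom ∈ HomThrough α v.obj := by
    rintro h ⟨g, rfl⟩
    exact ⟨g.hom, by simp [homToSub]⟩
  obtain ⟨e, he⟩ := hv (fun h => φ ⟨h.1.hom, hmem h.1 h.2⟩)
  refine ⟨(m ≫ e.hom : b ⟶ v.obj), fun f hf f' hf' hfe hf'e => ?_⟩
  have m1 : (ObjectProperty.homMk (f ≫ m) ≫ e :
      (⟨a, ha⟩ : ObjectProperty.FullSubcategory Q) ⟶ v) ∈ HomThrough ((homToSub ha ha' α)) v := by
    obtain ⟨g, hg⟩ := hF hf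
    exact ⟨ObjectProperty.homMk (g ≫ m) ≫ e, by ext; simp [homToSub, hg]⟩
  have m2 : (ObjectProperty.homMk (f' ≫ m) ≫ e :
      (⟨a, ha⟩ : ObjectProperty.FullSubcategory Q) ⟶ v) ∈ HomThrough ((homToSub ha ha' α)) v := by
    obtain ⟨g, hg⟩ := hF hf'
    exact ⟨ObjectProperty.homMk (g ≫ m) ≫ e, by ext; simp [homToSub, hg]⟩
  calc φ ⟨(f ≫ (m ≫ e.hom : b ⟶ v.obj) : a ⟶ v.obj), hfe⟩
      = φ ⟨_, hmem _ m1⟩ := phi_congr φ _ _ (by simp)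
    _ = φ ⟨_, hmem _ m2⟩ :=
        he _ (Finset.mem_image_of_mem _ hf) _ (Finset.mem_image_of_mem _ hf') m1 m2
    _ = φ ⟨(f' ≫ (m ≫ e.hom : b ⟶ v.obj) : a ⟶ v.obj), hf'e⟩ := phi_congr φ _ _ (by simp)

end Helpers

/-- Let `𝔖 ⊆ 𝔖'` be an amalgamation extension — `𝔖` is the full subcategory on the
objects satisfying `P`, it is cofinal, every `𝔖'`-object outside `𝔖` is amalgamable,
and every amalgamable `𝔖`-arrow factors through an amalgamable object of `𝔖'` —
and suppose the full subcategory `am(𝔖')` of amalgamable objects is cofinal in `𝔖'`.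
Then `𝔖` has the weak Ramsey property iff `am(𝔖')` has the Ramsey property. -/
theorem weakRamsey_iff_ramsey_am_of_amalgamationExtension {C : Type u}
    [Category.{v} C] (P : C → Prop)
    (hcof : ∀ x : C, ∃ y : C, P y ∧ Nonempty (x ⟶ y))
    (hout : ∀ x : C, ¬ P x → Amalgamable (𝟙 x))
    (hfactor : ∀ {b b' : ObjectProperty.FullSubcategory P} (β : b ⟶ b'), Amalgamable β →
      ∃ (w : C) (_ : Amalgamable (𝟙 w)) (f : b.obj ⟶ w) (g : w ⟶ b'.obj), f ≫ g = β.hom)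
    (hamcof : ∀ x : C, ∃ y : C, Amalgamable (𝟙 y) ∧ Nonempty (x ⟶ y)) :
    WeakRamsey (ObjectProperty.FullSubcategory P) ↔
      RamseyProp (ObjectProperty.FullSubcategory (fun x : C => Amalgamable (𝟙 x))) := by
  constructor
  · intro hWR a
    have ha : Amalgamable (𝟙 a.obj) := a.property
    obtain ⟨s, hs, ⟨p⟩⟩ := hcof a.obj
    obtain ⟨a', α, hα⟩ := hWR ⟨s, hs⟩
    have hαC : IsRamseyArrow (show s ⟶ a'.obj from α.hom) :=
      isRamseyArrow_of_fullSub hcof hs a'.property α.hom hα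
    have h2 : IsRamseyArrow (p ≫ α.hom : a.obj ⟶ a'.obj) := isRamseyArrow_precomp p hαC
    have h3 : IsRamseyArrow (𝟙 a.obj) := isRamseyArrow_id_of_amalgamable ha h2
    exact isRamseyArrow_fullSub hamcof (𝟙 a) h3
  · intro hR a
    obtain ⟨w, hw, ⟨i⟩⟩ := hamcof a.obj
    obtain ⟨s', hs', ⟨j⟩⟩ := hcof w
    have h1 : IsRamseyArrow (𝟙 w) :=
      isRamseyArrow_of_fullSub hamcof hw hw (𝟙 w) (hR ⟨w, hw⟩)
    have h2 : IsRamseyArrow (𝟙 w ≫ j) := isRamseyArrow_postcomp j h1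
    rw [Category.id_comp] at h2
    have h3 : IsRamseyArrow (i ≫ j : a.obj ⟶ s') := isRamseyArrow_precomp i h2
    refine ⟨⟨s', hs'⟩, homToSub a.property hs' (i ≫ j),
      isRamseyArrow_fullSub hcof (homToSub a.property hs' (i ≫ j)) ?_⟩
    exact h3
end

section
/- Let M be a monoid and α ∈ M. Let F be the submonoid {f ∈ M : Mα·f ⊆ Mα}, and let G be the directed graph with vertex set Mα and an edge x → x·f for every x ∈ Mα and f ∈ F. If G has finitely many undirected (weakly) connected components, then α is a Ramsey element of M if and only if α satisfies the left equalization condition (LE). In particular this equivalence holds when (i) M is finite, (ii) M is commutative, or (iii) α is left-invertible (in particular when α is the unit or M is a group). -/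
/-- `Mα`: the set of left multiples of `α`, i.e. the hom-set `𝔖(α, ·)` when the monoid
`M` is viewed as a one-object category. -/
def leftMultiples {M : Type*} [Monoid M] (α : M) : Set M :=
  {x | ∃ y : M, x = y * α}

/-- `α ∈ M` is a Ramsey element: for every `k ∈ ℕ`, every finite `F ⊆ Mα` and every
coloring `φ : Mα → Fin k` there is `e ∈ M` such that `φ` is constant on `eF`. -/
def IsRamseyElement {M : Type*} [Monoid M] (α : M) : Prop :=
  ∀ (k : ℕ) (F : Finset M), (F : Set M) ⊆ leftMultiples α →
    ∀ φ : leftMultiples α → Fin k,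
      ∃ e : M, ∀ x ∈ F, ∀ y ∈ F,
        ∀ (hx : e * x ∈ leftMultiples α) (hy : e * y ∈ leftMultiples α),
          φ ⟨e * x, hx⟩ = φ ⟨e * y, hy⟩

/-- The left equalization condition (LE): every two elements of `Mα` can be equalized
by a common left multiplier. -/
def LeftEqualization {M : Type*} [Monoid M] (α : M) : Prop :=
  ∀ x ∈ leftMultiples α, ∀ y ∈ leftMultiples α, ∃ e : M, e * x = e * y

/-- `f` belongs to the submonoid `F = {f ∈ M : Mα·f ⊆ Mα}`. -/
def ActsOnLeftMultiples {M : Type*} [Monoid M] (α : M) (f : M) : Prop :=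
  ∀ x ∈ leftMultiples α, x * f ∈ leftMultiples α

/-- The edge relation of the graph `G` of the right action of
`F = {f : Mα·f ⊆ Mα}` on the vertex set `Mα`: an edge `x → x·f` for every `f ∈ F`. -/
def rightActionEdge {M : Type*} [Monoid M] (α : M)
    (x y : leftMultiples α) : Prop :=
  ∃ f : M, ActsOnLeftMultiples α f ∧ (x : M) * f = (y : M)


open Function

section ThreeColoring

open Classical

variable {X : Type*}

private def orbRel (g : X → X) (z w : X) : Prop := ∃ m n : ℕ, g^[m] z = g^[n] w

private lemma orbRel_refl (g : X → X) (z : X) : orbRel g z z := ⟨0, 0, rfl⟩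

private lemma orbRel_symm {g : X → X} {z w : X} (h : orbRel g z w) : orbRel g w z := by
  obtain ⟨m, n, h⟩ := h; exact ⟨n, m, h.symm⟩

private lemma orbRel_trans {g : X → X} {z w v : X} (h1 : orbRel g z w) (h2 : orbRel g w v) :
    orbRel g z v := by
  obtain ⟨m, n, h1⟩ := h1
  obtain ⟨m', n', h2⟩ := h2
  refine ⟨m' + m, n + n', ?_⟩
  calc g^[m' + m] z = g^[m'] (g^[m] z) := Function.iterate_add_apply g m' m z
    _ = g^[m'] (g^[n] w) := by rw [h1]
    _ = g^[m' + n] w := (Function.iterate_add_apply g m' n w).symm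
    _ = g^[n + m'] w := by rw [Nat.add_comm]
    _ = g^[n] (g^[m'] w) := Function.iterate_add_apply g n m' w
    _ = g^[n] (g^[n'] v) := by rw [h2]
    _ = g^[n + n'] v := (Function.iterate_add_apply g n n' v).symm

private def orbSetoid (g : X → X) : Setoid X :=
  ⟨orbRel g, ⟨orbRel_refl g, orbRel_symm, orbRel_trans⟩⟩

private noncomputable def orbRep (g : X → X) (z : X) : X :=
  (Quotient.mk (orbSetoid g) z).out

private lemma orbRep_rel (g : X → X) (z : X) : orbRel g z (orbRep g z) :=
  orbRel_symm (Quotient.exact (s := orbSetoid g) (Quotient.out_eq _))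

private lemma orbRel_g (g : X → X) (z : X) : orbRel g (g z) z :=
  ⟨0, 1, by simp⟩

private lemma orbRep_g (g : X → X) (z : X) : orbRep g (g z) = orbRep g z := by
  unfold orbRep
  rw [Quotient.sound (s := orbSetoid g) (orbRel_g g z)]

private def IsPer (g : X → X) (z : X) : Prop :=
  ∃ w, (∃ p, 0 < p ∧ g^[p] w = w) ∧ orbRel g z w

private lemma isPer_g (g : X → X) (z : X) : IsPer g (g z) ↔ IsPer g z := by
  constructor
  · rintro ⟨w, hc, hr⟩
    exact ⟨w, hc, orbRel_trans (orbRel_symm (orbRel_g g z)) hr⟩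
  · rintro ⟨w, hc, hr⟩
    exact ⟨w, hc, orbRel_trans (orbRel_g g z) hr⟩

/-! ### the aperiodic case : an integer grading -/

private noncomputable def lam (g : X → X) (z : X) : ℤ :=
  ((orbRep_rel g z).choose_spec.choose : ℤ) - ((orbRep_rel g z).choose : ℤ)

private lemma lam_spec (g : X → X) (z : X) :
    ∃ m n : ℕ, lam g z = (n : ℤ) - (m : ℤ) ∧ g^[m] z = g^[n] (orbRep g z) :=
  ⟨_, _, rfl, (orbRep_rel g z).choose_spec.choose_spec⟩

private lemma rep_iter_inj {g : X → X} {z : X} (hz : ¬ IsPer g z) {a b : ℕ}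
    (h : g^[a] (orbRep g z) = g^[b] (orbRep g z)) : a = b := by
  have aux : ∀ a b : ℕ, a < b →
      g^[a] (orbRep g z) = g^[b] (orbRep g z) → False := by
    intro a b hab h
    apply hz
    refine ⟨g^[a] (orbRep g z), ⟨b - a, by omega, ?_⟩, ?_⟩
    · rw [← Function.iterate_add_apply, Nat.sub_add_cancel hab.le, h]
    · exact orbRel_trans (orbRep_rel g z) ⟨a, 0, by simp⟩
  rcases lt_trichotomy a b with h' | h' | h'
  · exact absurd h (fun h => aux a b h' h)
  · exact h'
  · exact absurd h.symm (fun h => aux b a h' h)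

private lemma lam_g {g : X → X} {z : X} (hz : ¬ IsPer g z) : lam g (g z) = lam g z + 1 := by
  obtain ⟨m, n, hl, he⟩ := lam_spec g z
  obtain ⟨m', n', hl', he'⟩ := lam_spec g (g z)
  rw [orbRep_g] at he'
  have h1 : g^[m' + 1] z = g^[n'] (orbRep g z) := by
    rw [Function.iterate_add_apply]; simpa using he'
  have h2 : g^[m + n'] (orbRep g z) = g^[(m' + 1) + n] (orbRep g z) := by
    calc g^[m + n'] (orbRep g z) = g^[m] (g^[n'] (orbRep g z)) :=
          Function.iterate_add_apply g m n' _
      _ = g^[m] (g^[m' + 1] z) := by rw [h1]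
      _ = g^[m + (m' + 1)] z := (Function.iterate_add_apply g m (m' + 1) z).symm
      _ = g^[(m' + 1) + m] z := by rw [Nat.add_comm]
      _ = g^[m' + 1] (g^[m] z) := Function.iterate_add_apply g (m' + 1) m z
      _ = g^[m' + 1] (g^[n] (orbRep g z)) := by rw [he]
      _ = g^[(m' + 1) + n] (orbRep g z) := (Function.iterate_add_apply g (m' + 1) n _).symm
  have h3 : m + n' = (m' + 1) + n := rep_iter_inj hz h2
  rw [hl, hl']; omega

/-! ### the periodic case -/

private def PerP (g : X → X) (ρ : X) : Prop :=
  ∃ w, (∃ p, 0 < p ∧ g^[p] w = w) ∧ orbRel g ρ w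

open Classical in
private noncomputable def w0 (g : X → X) (ρ : X) : X :=
  if h : PerP g ρ then h.choose else ρ

private lemma w0_cyc {g : X → X} {ρ : X} (h : PerP g ρ) :
    ∃ p, 0 < p ∧ g^[p] (w0 g ρ) = w0 g ρ := by
  unfold w0; rw [dif_pos h]; exact h.choose_spec.1

private lemma w0_rel {g : X → X} {ρ : X} (h : PerP g ρ) : orbRel g ρ (w0 g ρ) := by
  unfold w0; rw [dif_pos h]; exact h.choose_spec.2

open Classical in
private noncomputable def per (g : X → X) (ρ : X) : ℕ :=
  if h : ∃ p, 0 < p ∧ g^[p] (w0 g ρ) = w0 g ρ then Nat.find h else 1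

private lemma per_pos {g : X → X} {ρ : X} (h : PerP g ρ) : 0 < per g ρ := by
  unfold per; rw [dif_pos (w0_cyc h)]
  exact (Nat.find_spec (w0_cyc h)).1

private lemma per_fix {g : X → X} {ρ : X} (h : PerP g ρ) :
    g^[per g ρ] (w0 g ρ) = w0 g ρ := by
  unfold per; rw [dif_pos (w0_cyc h)]
  exact (Nat.find_spec (w0_cyc h)).2

private lemma per_min {g : X → X} {ρ : X} (h : PerP g ρ) {q : ℕ} (hq : 0 < q)
    (hfix : g^[q] (w0 g ρ) = w0 g ρ) : per g ρ ≤ q := by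
  unfold per; rw [dif_pos (w0_cyc h)]
  exact Nat.find_min' (w0_cyc h) ⟨hq, hfix⟩

private lemma iter_mod {g : X → X} {ρ : X} (h : PerP g ρ) (i : ℕ) :
    g^[i] (w0 g ρ) = g^[i % per g ρ] (w0 g ρ) := by
  conv_lhs => rw [← Nat.mod_add_div i (per g ρ)]
  rw [Function.iterate_add_apply, Function.iterate_mul,
    Function.iterate_fixed (per_fix h)]

private lemma idx_inj {g : X → X} {ρ : X} (h : PerP g ρ) {i j : ℕ}
    (hi : i < per g ρ) (hj : j < per g ρ)
    (hij : g^[i] (w0 g ρ) = g^[j] (w0 g ρ)) : i = j := by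
  have aux : ∀ i j : ℕ, i < j → j < per g ρ →
      g^[i] (w0 g ρ) = g^[j] (w0 g ρ) → False := by
    intro i j hlt hjp heq
    have h1 : g^[per g ρ - j + i] (w0 g ρ) = w0 g ρ := by
      calc g^[per g ρ - j + i] (w0 g ρ) = g^[per g ρ - j] (g^[i] (w0 g ρ)) :=
            Function.iterate_add_apply g _ i _
        _ = g^[per g ρ - j] (g^[j] (w0 g ρ)) := by rw [heq]
        _ = g^[per g ρ - j + j] (w0 g ρ) := (Function.iterate_add_apply g _ j _).symm
        _ = g^[per g ρ] (w0 g ρ) := by rw [Nat.sub_add_cancel hjp.le]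
        _ = w0 g ρ := per_fix h
    have := per_min h (q := per g ρ - j + i) (by omega) h1
    omega
  rcases lt_trichotomy i j with h' | h' | h'
  · exact absurd hij (fun hh => aux i j h' hj hh)
  · exact h'
  · exact absurd hij.symm (fun hh => aux j i h' hi hh)

private lemma perP_rep {g : X → X} {z : X} (hz : IsPer g z) : PerP g (orbRep g z) := by
  obtain ⟨w, hc, hr⟩ := hz
  exact ⟨w, hc, orbRel_trans (orbRel_symm (orbRep_rel g z)) hr⟩

private lemma dz_ex {g : X → X} {z : X} (hz : IsPer g z) :
    ∃ m i : ℕ, g^[m] z = g^[i] (w0 g (orbRep g z)) := by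
  obtain ⟨m, n, h⟩ := orbRel_trans (orbRep_rel g z) (w0_rel (perP_rep hz))
  exact ⟨m, n, h⟩

open Classical in
private noncomputable def dz (g : X → X) (z : X) : ℕ :=
  if h : ∃ m i : ℕ, g^[m] z = g^[i] (w0 g (orbRep g z)) then Nat.find h else 0

private lemma dz_spec {g : X → X} {z : X} (hz : IsPer g z) :
    ∃ i, g^[dz g z] z = g^[i] (w0 g (orbRep g z)) := by
  unfold dz; rw [dif_pos (dz_ex hz)]
  exact Nat.find_spec (dz_ex hz)

private lemma dz_min {g : X → X} {z : X} (hz : IsPer g z) {m : ℕ} (hm : m < dz g z) :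
    ¬ ∃ i, g^[m] z = g^[i] (w0 g (orbRep g z)) := by
  unfold dz at hm; rw [dif_pos (dz_ex hz)] at hm
  exact Nat.find_min (dz_ex hz) hm

open Classical in
private noncomputable def findIdx (g : X → X) (ρ : X) (y : X) : ℕ :=
  (if h : ∃ i, y = g^[i] (w0 g ρ) then Nat.find h else 0) % per g ρ

private lemma findIdx_lt {g : X → X} {ρ : X} (h : PerP g ρ) (y : X) :
    findIdx g ρ y < per g ρ :=
  Nat.mod_lt _ (per_pos h)

private lemma findIdx_spec {g : X → X} {ρ : X} (h : PerP g ρ) {y : X}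
    (hy : ∃ i, y = g^[i] (w0 g ρ)) : y = g^[findIdx g ρ y] (w0 g ρ) := by
  unfold findIdx; rw [dif_pos hy]
  rw [← iter_mod h]
  exact Nat.find_spec hy

private noncomputable def idx (g : X → X) (z : X) : ℕ :=
  findIdx g (orbRep g z) (g^[dz g z] z)

private lemma idx_lt {g : X → X} {z : X} (hz : IsPer g z) : idx g z < per g (orbRep g z) :=
  findIdx_lt (perP_rep hz) _

private lemma idx_spec {g : X → X} {z : X} (hz : IsPer g z) :
    g^[dz g z] z = g^[idx g z] (w0 g (orbRep g z)) := by
  apply findIdx_spec (perP_rep hz)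
  obtain ⟨i, hi⟩ := dz_spec hz
  exact ⟨i, hi⟩

/-! ### transition lemmas -/

private lemma trans_d0 {g : X → X} {z : X} (hz : IsPer g z) (hd : dz g z = 0) :
    dz g (g z) = 0 ∧ idx g (g z) = (idx g z + 1) % per g (orbRep g z) := by
  have hz' : IsPer g (g z) := (isPer_g g z).2 hz
  have hρ := perP_rep hz
  have hr : orbRep g (g z) = orbRep g z := orbRep_g g z
  have hzval : z = g^[idx g z] (w0 g (orbRep g z)) := by
    have := idx_spec hz; rwa [hd, Function.iterate_zero_apply] at this
  have hgz : g z = g^[idx g z + 1] (w0 g (orbRep g z)) := by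
    rw [Function.iterate_succ_apply', ← hzval]
  have hd0 : dz g (g z) = 0 := by
    unfold dz
    rw [dif_pos (dz_ex hz')]
    rw [Nat.find_eq_zero]
    refine ⟨idx g z + 1, ?_⟩
    rw [Function.iterate_zero_apply, hr, ← hgz]
  refine ⟨hd0, ?_⟩
  have h1 : idx g (g z) < per g (orbRep g z) := by
    have := idx_lt hz'; rwa [hr] at this
  have h2 : (idx g z + 1) % per g (orbRep g z) < per g (orbRep g z) :=
    Nat.mod_lt _ (per_pos hρ)
  apply idx_inj hρ h1 h2
  have h3 : g^[idx g (g z)] (w0 g (orbRep g z)) = g z := by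
    have := idx_spec hz'
    rw [hd0, Function.iterate_zero_apply, hr] at this
    exact this.symm
  rw [h3, ← iter_mod hρ, ← hgz]

private lemma trans_dpos {g : X → X} {z : X} (hz : IsPer g z) (hd : dz g z ≠ 0) :
    dz g (g z) = dz g z - 1 ∧ idx g (g z) = idx g z := by
  have hz' : IsPer g (g z) := (isPer_g g z).2 hz
  have hr : orbRep g (g z) = orbRep g z := orbRep_g g z
  have hstep : ∀ m : ℕ, g^[m] (g z) = g^[m + 1] z := by
    intro m; rw [Function.iterate_succ_apply]
  have hd' : dz g (g z) = dz g z - 1 := by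
    have hdef : dz g (g z) = Nat.find (dz_ex hz') := by
      unfold dz; rw [dif_pos (dz_ex hz')]
    rw [hdef, Nat.find_eq_iff]
    constructor
    · obtain ⟨i, hi⟩ := dz_spec hz
      refine ⟨i, ?_⟩
      rw [hstep, hr, Nat.sub_add_cancel (Nat.one_le_iff_ne_zero.2 hd), hi]
    · intro m hm hcon
      obtain ⟨i, hi⟩ := hcon
      rw [hstep, hr] at hi
      exact dz_min hz (m := m + 1) (by omega) ⟨i, hi⟩
  refine ⟨hd', ?_⟩
  unfold idx
  rw [hr, hd', hstep, Nat.sub_add_cancel (Nat.one_le_iff_ne_zero.2 hd)]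

/-! ### the coloring -/

private def cyCol (p s : ℕ) : Fin 3 :=
  if s + 1 = p then 2 else if s % 2 = 0 then 0 else 1

private def offCol (p s d : ℕ) : Fin 3 :=
  if (d + (if cyCol p s = 2 then 0 else (cyCol p s).val)) % 2 = 0 then 0 else 1

open Classical in
private noncomputable def col (g : X → X) (z : X) : Fin 3 :=
  if hz : IsPer g z then
    (if dz g z = 0 then cyCol (per g (orbRep g z)) (idx g z)
     else offCol (per g (orbRep g z)) (idx g z) (dz g z))
  else (if Even (lam g z) then 0 else 1)

private lemma cyCol_ne {p s : ℕ} (hp : 2 ≤ p) (hs : s < p) :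
    cyCol p s ≠ cyCol p ((s + 1) % p) := by
  unfold cyCol
  by_cases h1 : s + 1 = p
  · have : (s + 1) % p = 0 := by rw [h1, Nat.mod_self]
    rw [this, if_pos h1, if_neg (by omega), if_pos (by omega)]
    decide
  · have hmod : (s + 1) % p = s + 1 := Nat.mod_eq_of_lt (by omega)
    rw [hmod, if_neg h1]
    by_cases h2 : s + 1 + 1 = p
    · rw [if_pos h2]
      by_cases h3 : s % 2 = 0
      · rw [if_pos h3]; decide
      · rw [if_neg h3]; decide
    · rw [if_neg h2]
      by_cases h3 : s % 2 = 0
      · rw [if_pos h3, if_neg (by omega)]; decide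
      · rw [if_neg h3, if_pos (by omega)]; decide

private lemma offCol_ne_cyCol (p s : ℕ) : offCol p s 1 ≠ cyCol p s := by
  unfold offCol
  by_cases h2 : cyCol p s = 2
  · rw [if_pos h2, h2, if_neg (by norm_num)]
    decide
  · rw [if_neg h2]
    have hval : (cyCol p s).val = 0 ∨ (cyCol p s).val = 1 := by
      have h3 := (cyCol p s).isLt
      have hv : (cyCol p s).val ≠ 2 := fun h => h2 (Fin.ext h)
      omega
    rcases hval with h | h
    · rw [h, if_neg (by norm_num)]
      intro hcon; rw [← hcon] at h; simp at h
    · rw [h, if_pos (by norm_num)]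
      intro hcon; rw [← hcon] at h; simp at h

private lemma offCol_ne_offCol {p s d : ℕ} (hd : 2 ≤ d) : offCol p s d ≠ offCol p s (d - 1) := by
  unfold offCol
  set c := (if cyCol p s = 2 then 0 else (cyCol p s).val) with hc
  by_cases h : (d + c) % 2 = 0
  · rw [if_pos h, if_neg (by omega)]; decide
  · rw [if_neg h, if_pos (by omega)]; decide

private lemma col_proper (g : X → X) {z : X} (hne : g z ≠ z) : col g z ≠ col g (g z) := by
  by_cases hz : IsPer g z
  · have hz' : IsPer g (g z) := (isPer_g g z).2 hz
    have hρ := perP_rep hz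
    have hr : orbRep g (g z) = orbRep g z := orbRep_g g z
    unfold col
    rw [dif_pos hz, dif_pos hz', hr]
    by_cases hd : dz g z = 0
    · obtain ⟨hd0, hidx⟩ := trans_d0 hz hd
      rw [hd, if_pos rfl, hd0, if_pos rfl, hidx]
      have hp2 : 2 ≤ per g (orbRep g z) := by
        rcases Nat.lt_or_ge (per g (orbRep g z)) 2 with h | h
        · exfalso
          have hp1 : per g (orbRep g z) = 1 := by have := per_pos hρ; omega
          have hs0 : idx g z = 0 := by have := idx_lt hz; omega
          have hzw : z = w0 g (orbRep g z) := by
            have := idx_spec hz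
            rw [hd, hs0, Function.iterate_zero_apply, Function.iterate_zero_apply] at this
            exact this
          have hfix1 : g (w0 g (orbRep g z)) = w0 g (orbRep g z) := by
            have h5 := per_fix hρ
            rw [hp1] at h5
            simpa using h5
          have : g z = z := by rw [hzw]; exact hfix1
          exact hne this
        · exact h
      exact cyCol_ne hp2 (idx_lt hz)
    · obtain ⟨hd', hidx⟩ := trans_dpos hz hd
      rw [if_neg hd, hd', hidx]
      by_cases h1 : dz g z = 1
      · rw [h1, if_pos rfl]
        exact offCol_ne_cyCol _ _
      · rw [if_neg (by omega)]
        exact offCol_ne_offCol (by omega)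
  · have hz' : ¬ IsPer g (g z) := fun h => hz ((isPer_g g z).1 h)
    unfold col
    rw [dif_neg hz, dif_neg hz', lam_g hz]
    by_cases h : Even (lam g z)
    · rw [if_pos h, if_neg (by simpa [Int.even_add_one] using h)]
      decide
    · rw [if_neg h, if_pos (by simpa [Int.even_add_one] using h)]
      decide

private lemma three_coloring (g : X → X) :
    ∃ φ : X → Fin 3, ∀ z, g z ≠ z → φ z ≠ φ (g z) :=
  ⟨col g, fun _ h => col_proper g h⟩

end ThreeColoring

section RamseyLE

variable {M : Type*} [Monoid M] {α : M}

private lemma mem_lm_mul {x : M} (hx : x ∈ leftMultiples α) (e : M) :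
    e * x ∈ leftMultiples α := by
  obtain ⟨c, rfl⟩ := hx
  exact ⟨e * c, (mul_assoc e c α).symm⟩

private lemma acts_of_mem {v : M} (hv : v ∈ leftMultiples α) : ActsOnLeftMultiples α v := by
  obtain ⟨b, rfl⟩ := hv
  intro z _
  exact ⟨z * b, (mul_assoc z b α).symm⟩

/-- Key lemma: if `α` is Ramsey, then any `u ∈ Mα` can be equalized with `u*f`. -/
private lemma lemA (hR : IsRamseyElement α) {u f : M} (hu : u ∈ leftMultiples α)
    (hf : ActsOnLeftMultiples α f) : ∃ e : M, e * u = e * (u * f) := by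
  by_contra hcon
  push_neg at hcon
  classical
  let g : leftMultiples α → leftMultiples α := fun z => ⟨z.1 * f, hf z.1 z.2⟩
  obtain ⟨φ, hφ⟩ := three_coloring g
  have hfu : u * f ∈ leftMultiples α := hf u hu
  obtain ⟨e, he⟩ := hR 3 {u, u * f}
    (by
      intro x hx
      simp only [Finset.coe_insert, Finset.coe_singleton, Set.mem_insert_iff,
        Set.mem_singleton_iff] at hx
      rcases hx with rfl | rfl
      · exact hu
      · exact hfu) φ
  have h1 := he u (Finset.mem_insert_self _ _) (u * f)
    (Finset.mem_insert_of_mem (Finset.mem_singleton_self _))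
    (mem_lm_mul hu e) (mem_lm_mul hfu e)
  set z : leftMultiples α := ⟨e * u, mem_lm_mul hu e⟩ with hzdef
  have hgz : g z = ⟨e * (u * f), mem_lm_mul hfu e⟩ := Subtype.ext (mul_assoc e u f)
  have hne : g z ≠ z := by
    rw [hgz]
    intro hcontra
    exact hcon e ((Subtype.ext_iff.1 hcontra).symm)
  exact hφ z hne (by rw [hgz]; exact h1)

private lemma eqvgen_equalize (hR : IsRamseyElement α) :
    ∀ u v : leftMultiples α, Relation.EqvGen (rightActionEdge α) u v →
      ∀ m : M, ∃ e : M, e * (m * u.1) = e * (m * v.1) := by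
  intro u v h
  induction h with
  | rel u v huv =>
    intro m
    obtain ⟨f, hf, hvu⟩ := huv
    obtain ⟨e, he⟩ := lemA hR (mem_lm_mul u.2 m) hf
    refine ⟨e, ?_⟩
    rw [he, mul_assoc m u.1 f, hvu]
  | refl u => exact fun m => ⟨1, rfl⟩
  | symm u v _ ih =>
    intro m
    obtain ⟨e, he⟩ := ih m
    exact ⟨e, he.symm⟩
  | trans u v w _ _ ih1 ih2 =>
    intro m
    obtain ⟨e1, h1⟩ := ih1 m
    obtain ⟨e2, h2⟩ := ih2 (e1 * m)
    refine ⟨e2 * e1, ?_⟩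
    calc (e2 * e1) * (m * u.1) = e2 * (e1 * (m * u.1)) := mul_assoc _ _ _
      _ = e2 * (e1 * (m * v.1)) := by rw [h1]
      _ = e2 * ((e1 * m) * v.1) := by rw [mul_assoc]
      _ = e2 * ((e1 * m) * w.1) := by rw [h2]
      _ = e2 * (e1 * (m * w.1)) := by rw [mul_assoc]
      _ = (e2 * e1) * (m * w.1) := (mul_assoc _ _ _).symm

private lemma ramsey_to_LE (hfin : Finite (Quot (rightActionEdge α)))
    (hR : IsRamseyElement α) : LeftEqualization α := by
  classical
  intro x hx y hy
  obtain ⟨n, ⟨eqv⟩⟩ := Finite.exists_equiv_fin (Quot (rightActionEdge α))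
  set φ : leftMultiples α → Fin n := fun z => eqv (Quot.mk _ z) with hφdef
  obtain ⟨e₀, he₀⟩ := hR n {x, y}
    (by
      intro z hz
      simp only [Finset.coe_insert, Finset.coe_singleton, Set.mem_insert_iff,
        Set.mem_singleton_iff] at hz
      rcases hz with rfl | rfl
      · exact hx
      · exact hy) φ
  have h1 := he₀ x (Finset.mem_insert_self _ _) y
    (Finset.mem_insert_of_mem (Finset.mem_singleton_self _))
    (mem_lm_mul hx e₀) (mem_lm_mul hy e₀)
  have h2 : Quot.mk (rightActionEdge α) ⟨e₀ * x, mem_lm_mul hx e₀⟩ =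
      Quot.mk (rightActionEdge α) ⟨e₀ * y, mem_lm_mul hy e₀⟩ := eqv.injective h1
  have h3 := Quot.eq.1 h2
  obtain ⟨e, he⟩ := eqvgen_equalize hR _ _ h3 1
  refine ⟨e * e₀, ?_⟩
  simp only [one_mul] at he
  rw [mul_assoc, mul_assoc, he]

private lemma le_collapse (hLE : LeftEqualization α) (F : Finset M)
    (hF : (F : Set M) ⊆ leftMultiples α) :
    ∃ e : M, ∀ x ∈ F, ∀ y ∈ F, e * x = e * y := by
  classical
  induction F using Finset.induction_on with
  | empty => exact ⟨1, by simp⟩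
  | @insert a s ha ih =>
    have hsa : a ∈ leftMultiples α := hF (by simp)
    have hsub' : (s : Set M) ⊆ leftMultiples α := fun z hz => hF (by simp [hz])
    obtain ⟨e', he'⟩ := ih hsub'
    rcases s.eq_empty_or_nonempty with rfl | ⟨b, hb⟩
    · refine ⟨1, ?_⟩
      intro x hx y hy
      simp only [Finset.mem_insert, Finset.notMem_empty, or_false] at hx hy
      rw [hx, hy]
    · have hbmem : b ∈ leftMultiples α := hsub' hb
      obtain ⟨e'', he''⟩ := hLE (e' * a) (mem_lm_mul hsa e') (e' * b) (mem_lm_mul hbmem e')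
      refine ⟨e'' * e', ?_⟩
      have key : ∀ x ∈ insert a s, (e'' * e') * x = e'' * (e' * b) := by
        intro x hx
        rcases Finset.mem_insert.1 hx with rfl | hxs
        · rw [mul_assoc, he'']
        · rw [mul_assoc, he' x hxs b hb]
      intro x hx y hy
      rw [key x hx, key y hy]

private lemma le_to_ramsey (hLE : LeftEqualization α) : IsRamseyElement α := by
  intro k F hF φ
  obtain ⟨e, he⟩ := le_collapse hLE F hF
  refine ⟨e, fun x hx y hy hx' hy' => ?_⟩
  have : (⟨e * x, hx'⟩ : leftMultiples α) = ⟨e * y, hy'⟩ := Subtype.ext (he x hx y hy)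
  rw [this]

end RamseyLE


/-- If the graph of the right action of `F = {f : Mα·f ⊆ Mα}` on `Mα` has finitely many
undirected (weakly) connected components — the quotient `Quot (rightActionEdge α)` is
finite — then `α` is a Ramsey element iff it satisfies (LE). In particular this holds
when `M` is finite, when `M` is commutative, and when `α` is left-invertible. -/
theorem isRamseyElement_iff_leftEqualization {M : Type*} [Monoid M] (α : M) :
    (Finite (Quot (rightActionEdge α)) →
      (IsRamseyElement α ↔ LeftEqualization α)) ∧
    (Finite M → (IsRamseyElement α ↔ LeftEqualization α)) ∧
    ((∀ x y : M, x * y = y * x) → (IsRamseyElement α ↔ LeftEqualization α)) ∧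
    ((∃ β : M, β * α = 1) → (IsRamseyElement α ↔ LeftEqualization α)) := by
  have main : Finite (Quot (rightActionEdge α)) →
      (IsRamseyElement α ↔ LeftEqualization α) :=
    fun hfin => ⟨ramsey_to_LE hfin, le_to_ramsey⟩
  refine ⟨main, ?_, ?_, ?_⟩
  · intro hM
    have h1 : Finite (leftMultiples α) := Subtype.finite
    exact main (Finite.of_surjective (Quot.mk _) Quot.mk_surjective)
  · intro hcomm
    apply main
    have hss : Subsingleton (Quot (rightActionEdge α)) := by
      constructor
      intro a b
      induction a using Quot.ind with | _ u =>
      induction b using Quot.ind with | _ v =>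
      have e1 : rightActionEdge α u ⟨u.1 * v.1, acts_of_mem v.2 u.1 u.2⟩ :=
        ⟨v.1, acts_of_mem v.2, rfl⟩
      have e2 : rightActionEdge α v ⟨v.1 * u.1, acts_of_mem u.2 v.1 v.2⟩ :=
        ⟨u.1, acts_of_mem u.2, rfl⟩
      have hcv : (⟨u.1 * v.1, acts_of_mem v.2 u.1 u.2⟩ : leftMultiples α) =
          ⟨v.1 * u.1, acts_of_mem u.2 v.1 v.2⟩ := Subtype.ext (hcomm u.1 v.1)
      calc Quot.mk (rightActionEdge α) u
          = Quot.mk (rightActionEdge α) ⟨u.1 * v.1, acts_of_mem v.2 u.1 u.2⟩ :=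
            Quot.sound e1
        _ = Quot.mk (rightActionEdge α) ⟨v.1 * u.1, acts_of_mem u.2 v.1 v.2⟩ := by rw [hcv]
        _ = Quot.mk (rightActionEdge α) v := (Quot.sound e2).symm
    exact Finite.of_subsingleton
  · rintro ⟨β, hβ⟩
    apply main
    have hone : (1 : M) ∈ leftMultiples α := ⟨β, hβ.symm⟩
    have hss : Subsingleton (Quot (rightActionEdge α)) := by
      constructor
      intro a b
      induction a using Quot.ind with | _ u =>
      induction b using Quot.ind with | _ v =>
      have hu : rightActionEdge α ⟨1, hone⟩ u := ⟨u.1, acts_of_mem u.2, one_mul u.1⟩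
      have hv : rightActionEdge α ⟨1, hone⟩ v := ⟨v.1, acts_of_mem v.2, one_mul v.1⟩
      calc Quot.mk (rightActionEdge α) u
          = Quot.mk (rightActionEdge α) ⟨1, hone⟩ := (Quot.sound hu).symm
        _ = Quot.mk (rightActionEdge α) v := Quot.sound hv
    exact Finite.of_subsingleton
end

section
/- A monoid M has the Ramsey property (when viewed as a one-object category) if and only if for every x, y ∈ M there exists e ∈ M with e·x = e·y. -/
set_option maxRecDepth 4000

open Finset in
/-- Finite case: on any finite set `s`, there is a 5-coloring such that the
(non-loop) edges `a — f a` and `a — g a` inside `s` are properly colored. -/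
lemma finColor {M : Type*} [DecidableEq M] (f g : M → M) :
    ∀ (n : ℕ) (s : Finset M), s.card ≤ n →
      ∃ φ : M → Fin 5, ∀ a ∈ s,
        (f a ∈ s → f a ≠ a → φ (f a) ≠ φ a) ∧ (g a ∈ s → g a ≠ a → φ (g a) ≠ φ a) := by
  intro n
  induction n with
  | zero =>
    intro s hs
    have hse : s = ∅ := Finset.card_eq_zero.mp (Nat.le_antisymm hs (Nat.zero_le _))
    exact ⟨fun _ => 0, by simp [hse]⟩
  | succ n ih =>
    intro s hs
    rcases s.eq_empty_or_nonempty with rfl | hne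
    · exact ⟨fun _ => 0, by simp⟩
    -- double counting: some vertex has in-degree ≤ 2
    have hsum : ∑ v ∈ s, (s.filter (fun a => f a = v ∨ g a = v)).card ≤ 2 * s.card := by
      calc ∑ v ∈ s, (s.filter (fun a => f a = v ∨ g a = v)).card
          = ∑ v ∈ s, ∑ a ∈ s, (if f a = v ∨ g a = v then 1 else 0) := by
            simp only [Finset.card_filter]
        _ = ∑ a ∈ s, ∑ v ∈ s, (if f a = v ∨ g a = v then 1 else 0) := Finset.sum_comm
        _ ≤ ∑ a ∈ s, 2 := by
            refine Finset.sum_le_sum (fun a _ => ?_)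
            have h1 : ∑ v ∈ s, (if f a = v ∨ g a = v then 1 else 0)
                = (s.filter (fun v => f a = v ∨ g a = v)).card := by
              simp only [Finset.card_filter]
            rw [h1]
            have h2 : s.filter (fun v => f a = v ∨ g a = v) ⊆ {f a, g a} := by
              intro z hz
              simp only [Finset.mem_filter] at hz
              simp only [Finset.mem_insert, Finset.mem_singleton]
              tauto
            calc (s.filter (fun v => f a = v ∨ g a = v)).card
                ≤ ({f a, g a} : Finset M).card := Finset.card_le_card h2
              _ ≤ 2 := by
                  refine le_trans (Finset.card_insert_le _ _) ?_
                  simp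
        _ = 2 * s.card := by simp [mul_comm]
    have hv : ∃ v ∈ s, (s.filter (fun a => f a = v ∨ g a = v)).card ≤ 2 := by
      by_contra hcon
      push_neg at hcon
      have h3 : 3 * s.card ≤ ∑ v ∈ s, (s.filter (fun a => f a = v ∨ g a = v)).card := by
        calc 3 * s.card = ∑ _v ∈ s, 3 := by simp [mul_comm]
          _ ≤ _ := Finset.sum_le_sum (fun v hvv => hcon v hvv)
      have hpos : 0 < s.card := Finset.card_pos.mpr hne
      omega
    obtain ⟨v, hvmem, hdeg⟩ := hv
    have hcard : (s.erase v).card ≤ n := by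
      have := Finset.card_erase_lt_of_mem hvmem
      omega
    obtain ⟨φ, hφ⟩ := ih (s.erase v) hcard
    set N : Finset M := (s.filter (fun a => f a = v ∨ g a = v)) ∪ {f v, g v} with hNdef
    have hN : N.card ≤ 4 := by
      refine le_trans (Finset.card_union_le _ _) ?_
      have h2 : ({f v, g v} : Finset M).card ≤ 2 := by
        refine le_trans (Finset.card_insert_le _ _) ?_
        simp
      omega
    obtain ⟨c, hc⟩ : ∃ c : Fin 5, c ∉ N.image φ := by
      by_contra hall
      push_neg at hall
      have hsub : (Finset.univ : Finset (Fin 5)) ⊆ N.image φ := fun c _ => hall c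
      have h5 : (Finset.univ : Finset (Fin 5)).card ≤ (N.image φ).card :=
        Finset.card_le_card hsub
      have h6 : (N.image φ).card ≤ N.card := Finset.card_image_le
      simp [Finset.card_univ] at h5
      omega
    have step : ∀ h : M → M, h v ∈ N → (∀ b, b ∈ s → h b = v → b ∈ N) →
        (∀ b ∈ s.erase v, h b ∈ s.erase v → h b ≠ b → φ (h b) ≠ φ b) →
        ∀ a ∈ s, h a ∈ s → h a ≠ a →
          Function.update φ v c (h a) ≠ Function.update φ v c a := by
      intro h hvN hinN hIH a ha hhs hha
      by_cases hav : a = v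
      · subst hav
        rw [Function.update_of_ne hha, Function.update_self]
        intro heq
        exact hc (heq ▸ Finset.mem_image_of_mem φ hvN)
      · by_cases hhv : h a = v
        · rw [hhv, Function.update_self, Function.update_of_ne hav]
          intro heq
          exact hc (heq.symm ▸ Finset.mem_image_of_mem φ (hinN a ha hhv))
        · rw [Function.update_of_ne hhv, Function.update_of_ne hav]
          exact hIH a (Finset.mem_erase.mpr ⟨hav, ha⟩)
            (Finset.mem_erase.mpr ⟨hhv, hhs⟩) hha
    refine ⟨Function.update φ v c, fun a ha => ⟨?_, ?_⟩⟩
    · intro h1 h2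
      refine step f ?_ ?_ ?_ a ha h1 h2
      · exact Finset.mem_union_right _ (by simp)
      · intro b hb hbv
        exact Finset.mem_union_left _ (Finset.mem_filter.mpr ⟨hb, Or.inl hbv⟩)
      · intro b hb hb2 hb3
        exact (hφ b hb).1 hb2 hb3
    · intro h1 h2
      refine step g ?_ ?_ ?_ a ha h1 h2
      · exact Finset.mem_union_right _ (by simp)
      · intro b hb hbv
        exact Finset.mem_union_left _ (Finset.mem_filter.mpr ⟨hb, Or.inr hbv⟩)
      · intro b hb hb2 hb3
        exact (hφ b hb).2 hb2 hb3

/-- Compactness: a global 5-coloring proper for the (non-loop) edges `a — f a`, `a — g a`. -/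
lemma exists_coloring {M : Type*} [Nonempty M] (f g : M → M) :
    ∃ φ : M → Fin 5, ∀ a : M,
      (f a ≠ a → φ (f a) ≠ φ a) ∧ (g a ≠ a → φ (g a) ≠ φ a) := by
  classical
  have hcol : ∀ t : Finset M, ∃ φ : M → Fin 5, ∀ a ∈ t,
      (f a ∈ t → f a ≠ a → φ (f a) ≠ φ a) ∧ (g a ∈ t → g a ≠ a → φ (g a) ≠ φ a) :=
    fun t => finColor f g t.card t le_rfl
  choose Φ hΦ using hcol
  have hne : (Filter.atTop : Filter (Finset M)).NeBot := Filter.atTop_neBot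
  let U : Ultrafilter (Finset M) := Ultrafilter.of Filter.atTop
  have hU : ∀ S : Set (Finset M), S ∈ (Filter.atTop : Filter (Finset M)) → S ∈ U :=
    fun S hS => (Ultrafilter.of_le Filter.atTop) hS
  have key : ∀ a : M, ∃ c : Fin 5, {t : Finset M | Φ t a = c} ∈ U := by
    intro a
    by_contra hcon
    push_neg at hcon
    have hc : ∀ c : Fin 5, {t : Finset M | Φ t a ≠ c} ∈ U := by
      intro c
      have := (Ultrafilter.compl_mem_iff_notMem (s := {t : Finset M | Φ t a = c})).mpr
        (hcon c)
      simpa [Set.compl_setOf] using this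
    have hall : {t : Finset M | ∀ c : Fin 5, Φ t a ≠ c} ∈ U := by
      have h2 : (⋂ c : Fin 5, {t : Finset M | Φ t a ≠ c}) ∈ U :=
        (Filter.iInter_mem).mpr hc
      have heq : {t : Finset M | ∀ c : Fin 5, Φ t a ≠ c}
          = ⋂ c : Fin 5, {t : Finset M | Φ t a ≠ c} := by
        ext t; simp
      rw [heq]
      exact h2
    obtain ⟨t, ht⟩ := Filter.nonempty_of_mem hall
    exact ht (Φ t a) rfl
  choose ψ hψ using key
  refine ⟨ψ, fun a => ⟨?_, ?_⟩⟩
  · intro hfa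
    have h3 : {t : Finset M | ({a, f a} : Finset M) ⊆ t} ∈ U := by
      refine hU _ ?_
      exact Filter.mem_atTop ({a, f a} : Finset M)
    have hint : ({t : Finset M | Φ t a = ψ a} ∩ {t | Φ t (f a) = ψ (f a)}
        ∩ {t | ({a, f a} : Finset M) ⊆ t}) ∈ U :=
      Filter.inter_mem (Filter.inter_mem (hψ a) (hψ (f a))) h3
    obtain ⟨t, ⟨ht1, ht2⟩, ht3⟩ := Filter.nonempty_of_mem hint
    have hat : a ∈ t := ht3 (by simp)
    have hfat : f a ∈ t := ht3 (by simp)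
    have := (hΦ t a hat).1 hfat hfa
    rw [ht1, ht2] at this
    exact this
  · intro hga
    have h3 : {t : Finset M | ({a, g a} : Finset M) ⊆ t} ∈ U := by
      refine hU _ ?_
      exact Filter.mem_atTop ({a, g a} : Finset M)
    have hint : ({t : Finset M | Φ t a = ψ a} ∩ {t | Φ t (g a) = ψ (g a)}
        ∩ {t | ({a, g a} : Finset M) ⊆ t}) ∈ U :=
      Filter.inter_mem (Filter.inter_mem (hψ a) (hψ (g a))) h3
    obtain ⟨t, ⟨ht1, ht2⟩, ht3⟩ := Filter.nonempty_of_mem hint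
    have hat : a ∈ t := ht3 (by simp)
    have hgat : g a ∈ t := ht3 (by simp)
    have := (hΦ t a hat).2 hgat hga
    rw [ht1, ht2] at this
    exact this

/-- If any two elements can be left-equalized, any finite set can be. -/
lemma equalize_finset {M : Type*} [Monoid M]
    (h : ∀ x y : M, ∃ e : M, e * x = e * y) (F : Finset M) :
    ∃ e : M, ∀ a ∈ F, ∀ b ∈ F, e * a = e * b := by
  classical
  induction F using Finset.induction_on with
  | empty => exact ⟨1, by simp⟩
  | @insert c F hcF ih =>
    obtain ⟨e, he⟩ := ih
    rcases F.eq_empty_or_nonempty with rfl | ⟨a₀, ha₀⟩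
    · refine ⟨1, ?_⟩
      intro a ha b hb
      simp only [LawfulSingleton.insert_empty_eq, Finset.mem_singleton] at ha hb
      rw [ha, hb]
    · obtain ⟨d, hd⟩ := h (e * c) (e * a₀)
      refine ⟨d * e, ?_⟩
      intro a ha b hb
      rcases Finset.mem_insert.mp ha with rfl | ha' <;>
        rcases Finset.mem_insert.mp hb with rfl | hb'
      · rfl
      · rw [mul_assoc, hd, he a₀ ha₀ b hb', ← mul_assoc]
      · rw [mul_assoc d e a, he a ha' a₀ ha₀, ← hd, ← mul_assoc]
      · rw [mul_assoc, he a ha' b hb', ← mul_assoc]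

/-- A monoid has the Ramsey property (viewed as a one-object category) iff any two of
its elements can be equalized by a common left multiplier. -/
theorem monoid_ramsey_iff_left_equalizable {M : Type*} [Monoid M] :
    IsRamseyElement (1 : M) ↔ ∀ x y : M, ∃ e : M, e * x = e * y := by
  classical
  constructor
  · intro hR x y
    have : Nonempty M := ⟨1⟩
    obtain ⟨φ, hφ⟩ := exists_coloring (fun a : M => a * x) (fun a : M => a * y)
    have mem1 : ∀ z : M, z ∈ leftMultiples (1 : M) := fun z => ⟨z, (mul_one z).symm⟩
    have hF : ((({1, x, y} : Finset M) : Set M)) ⊆ leftMultiples (1 : M) :=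
      fun z _ => mem1 z
    obtain ⟨e, he⟩ := hR 5 ({1, x, y} : Finset M) hF (fun z => φ z.1)
    have h1 : (1 : M) ∈ ({1, x, y} : Finset M) := by simp
    have hxF : x ∈ ({1, x, y} : Finset M) := by simp
    have hyF : y ∈ ({1, x, y} : Finset M) := by simp
    have hex := he 1 h1 x hxF (mem1 _) (mem1 _)
    have hey := he 1 h1 y hyF (mem1 _) (mem1 _)
    simp only [mul_one] at hex hey
    have hxe : e * x = e := by
      by_contra hne
      exact (hφ e).1 hne hex.symm
    have hye : e * y = e := by
      by_contra hne
      exact (hφ e).2 hne hey.symm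
    exact ⟨e, by rw [hxe, hye]⟩
  · intro h k F hF φ
    obtain ⟨e, he⟩ := equalize_finset h F
    exact ⟨e, fun x hx y hy hx' hy' => congrArg φ (Subtype.ext (he x hx y hy))⟩
end

section
/- A finite monoid M has the Ramsey property if and only if M has a left zero, i.e. an element z with z·x = z for every x ∈ M. -/
/-- A finite monoid has the Ramsey property iff it has a left zero. -/
theorem finite_monoid_ramsey_iff_left_zero {M : Type*} [Monoid M] [Finite M] :
    IsRamseyElement (1 : M) ↔ ∃ z : M, ∀ x : M, z * x = z := by
  constructor
  · intro h
    cases nonempty_fintype M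
    classical
    obtain ⟨e, he⟩ := h (Fintype.card M) Finset.univ
      (fun x _ => ⟨x, (mul_one x).symm⟩)
      (fun x => (Fintype.equivFin M) x.1)
    refine ⟨e, fun x => ?_⟩
    have hx : e * x ∈ leftMultiples (1 : M) := ⟨e * x, (mul_one _).symm⟩
    have h1 : e * 1 ∈ leftMultiples (1 : M) := ⟨e * 1, (mul_one _).symm⟩
    have key := he x (Finset.mem_univ x) 1 (Finset.mem_univ 1) hx h1
    have key2 := (Fintype.equivFin M).injective key
    simpa using key2
  · rintro ⟨z, hz⟩ k F hF φ
    exact ⟨z, fun x _ y _ hx hy => congrArg φ (Subtype.ext (show z * x = z * y by rw [hz, hz]))⟩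
end

section
/- Let X be a nonempty set. The free monoid on X has no Ramsey element; in particular it does not have the weak Ramsey property. Indeed, fixing a generator x ∈ X and letting φ : FreeMonoid X → Fin 2 assign to each word the parity of the number of occurrences of x, for all α, e ∈ FreeMonoid X one has φ(e·x·α) ≠ φ(e·α). -/
/-- The parity of the number of occurrences of the generator `x` in a word of the free
monoid, as a coloring with values in `Fin 2`. -/
def parityColor {X : Type*} [DecidableEq X] (x : X) (w : FreeMonoid X) : Fin 2 :=
  ⟨(FreeMonoid.toList w).count x % 2, Nat.mod_lt _ (by norm_num)⟩

lemma parity_ne {X : Type*} [DecidableEq X] (x : X) (α e : FreeMonoid X) :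
    parityColor x (e * FreeMonoid.of x * α) ≠ parityColor x (e * α) := by
  have h1 : FreeMonoid.toList (e * FreeMonoid.of x * α)
      = FreeMonoid.toList e ++ [x] ++ FreeMonoid.toList α := rfl
  have h2 : FreeMonoid.toList (e * α) = FreeMonoid.toList e ++ FreeMonoid.toList α := rfl
  simp only [parityColor, h1, h2, List.count_append, List.count_singleton]
  intro h
  have := congrArg Fin.val h
  simp at this
  omega

/-- A nontrivial free monoid has no Ramsey element (in particular it does not have the
weak Ramsey property): for a generator `x`, the parity of the number of occurrences of
`x` witnesses this, since `φ(e·x·α) ≠ φ(e·α)` for all `α, e`. -/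
theorem freeMonoid_no_ramsey_element {X : Type*} [DecidableEq X] [Nonempty X] :
    (∀ α : FreeMonoid X, ¬ IsRamseyElement α) ∧
    (∀ (x : X) (α e : FreeMonoid X),
      parityColor x (e * FreeMonoid.of x * α) ≠ parityColor x (e * α)) := by
  refine ⟨?_, fun x α e => parity_ne x α e⟩
  intro α h
  classical
  obtain ⟨x⟩ := ‹Nonempty X›
  set F : Finset (FreeMonoid X) := {α, FreeMonoid.of x * α} with hF
  have hsub : (F : Set (FreeMonoid X)) ⊆ leftMultiples α := by
    intro w hw
    simp [hF] at hw
    rcases hw with rfl | rfl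
    · exact ⟨1, (one_mul _).symm⟩
    · exact ⟨FreeMonoid.of x, rfl⟩
  obtain ⟨e, he⟩ := h 2 F hsub (fun w => parityColor x w.1)
  have h1 : α ∈ F := by simp [hF]
  have h2 : FreeMonoid.of x * α ∈ F := by simp [hF]
  have := he α h1 (FreeMonoid.of x * α) h2 ⟨e, rfl⟩ ⟨e * FreeMonoid.of x, (mul_assoc _ _ _).symm⟩
  exact parity_ne x α e (by rw [mul_assoc]; exact this.symm)
end

section
/- Let X be a partially ordered set in which every three-element subset has a minimum (an 'almost linear order'). Then either X is linearly ordered, or there exist two distinct incomparable elements x, y ∈ X such that x and y are the only pair of incomparable elements of X, both x and y are maximal in X, and every element z ∈ X \ {x, y} satisfies z < x and z < y (so X \ {x, y} is linearly ordered). -/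
/-- Let `X` be a partial order in which every three-element subset has a minimum (an
"almost linear order"). Then either `X` is linearly ordered, or there is a (unique)
pair of distinct incomparable elements `x, y`, both maximal, which are the only
incomparable pair, and every other element lies strictly below both `x` and `y`. -/
theorem almost_linear_order_classification {X : Type*} [PartialOrder X]
    (h3 : ∀ x y z : X, x ≠ y → x ≠ z → y ≠ z →
      (x ≤ y ∧ x ≤ z) ∨ (y ≤ x ∧ y ≤ z) ∨ (z ≤ x ∧ z ≤ y)) :
    (∀ x y : X, x ≤ y ∨ y ≤ x) ∨
    (∃ x y : X, x ≠ y ∧ ¬ x ≤ y ∧ ¬ y ≤ x ∧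
      (∀ a b : X, a ≠ b → ¬ a ≤ b → ¬ b ≤ a →
        (a = x ∧ b = y) ∨ (a = y ∧ b = x)) ∧
      (∀ z : X, x ≤ z → z = x) ∧
      (∀ z : X, y ≤ z → z = y) ∧
      (∀ z : X, z ≠ x → z ≠ y → z < x ∧ z < y)) := by

  by_cases hlin : ∀ x y : X, x ≤ y ∨ y ≤ x
  · exact Or.inl hlin
  · right
    push_neg at hlin
    obtain ⟨x, y, hxy, hyx⟩ := hlin
    have hne : x ≠ y := fun h => hxy (h ▸ le_refl x)
    have hbelow : ∀ z : X, z ≠ x → z ≠ y → z < x ∧ z < y := by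
      intro z hzx hzy
      rcases h3 x y z hne (Ne.symm hzx) (Ne.symm hzy) with ⟨h1, _⟩ | ⟨h1, _⟩ | ⟨h1, h2⟩
      · exact absurd h1 hxy
      · exact absurd h1 hyx
      · exact ⟨lt_of_le_of_ne h1 hzx, lt_of_le_of_ne h2 hzy⟩
    refine ⟨x, y, hne, hxy, hyx, ?_, ?_, ?_, hbelow⟩
    · intro a b hab hab' hba'
      by_cases hax : a = x
      · subst hax
        by_cases hby : b = y
        · exact Or.inl ⟨rfl, hby⟩
        · exact absurd (hbelow b hab.symm hby).1.le hba'
      by_cases hay : a = y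
      · subst hay
        by_cases hbx : b = x
        · exact Or.inr ⟨rfl, hbx⟩
        · exact absurd (hbelow b hbx hab.symm).2.le hba'
      · have ha := hbelow a hax hay
        by_cases hbx : b = x
        · exact absurd (hbx ▸ ha.1.le) hab'
        by_cases hby : b = y
        · exact absurd (hby ▸ ha.2.le) hab'
        · have hb := hbelow b hbx hby
          rcases h3 a b x hab hax hbx with ⟨h1, _⟩ | ⟨h1, _⟩ | ⟨h1, _⟩
          · exact absurd h1 hab'
          · exact absurd h1 hba'
          · exact absurd h1 ha.1.not_ge
    · intro z hz
      by_contra hzx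
      exact absurd (le_antisymm (hbelow z hzx (fun h => hxy (h ▸ hz))).1.le hz) hzx
    · intro z hz
      by_contra hzy
      exact absurd (le_antisymm (hbelow z (fun h => hyx (h ▸ hz)) hzy).2.le hz) hzy
end
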